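/- arXiv:1904.07985 — 7 statements merged into one kernel-verified Lean document; each statement's English description precedes it below -/
import Mathlib

section
/- Let G be a connected graph and let G̃ = (Ṽ, Ẽ) be a connected subgraph of G. Let S be a collection of cycle edges of G that are not contained in Ẽ but are incident to Ṽ. Then there exists a subset S' ⊆ S of cardinality at least |S|/2 such that the graph obtained from G by removing all edges in S' is still connected. -/
/-- An edge `e` of a graph `G` is a *cycle edge* if it belongs to some cycle of `G`. -/
def SimpleGraph.IsCycleEdge {V : Type*} (G : SimpleGraph V) (e : Sym2 V) : Prop :=
  ∃ (v : V) (c : G.Walk v v), c.IsCycle ∧ e ∈ c.edges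

/-!
Let `W` be the vertex set of `G'` and split the vertices outside `W` into the connected components
of the graph of edges of `G` that avoid `W`. Every edge of `S` touches `W`, so deleting edges of `S`
never disconnects such a component internally, nor `G'`, whose edges are not in `S`; the graph stays
connected as long as every component keeps one edge into `W`. So keep one such exit edge for each
component all of whose exit edges lie in `S`, and delete the rest of `S`. Such a kept edge lies on a
cycle, and following the cycle the other way round from its outer endpoint leaves the component by a
second exit edge, also in `S`. Distinct components have disjoint sets of exit edges, so at most
half of `S` is kept.
-/

open Finset

theorem Finset.card_le_two_mul_card_sdiff_image {α β : Type*} [DecidableEq α] {s : Finset α}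
    {t : Finset β} (r : β → α) (P : β → α → Prop) [∀ b, DecidablePred (P b)]
    (hP : ∀ b b' a, P b a → P b' a → b = b') (htwo : ∀ b ∈ t, 2 ≤ #{a ∈ s | P b a}) :
    #s ≤ 2 * #(s \ t.image r) := by
  have hdisj : (t : Set β).PairwiseDisjoint fun b ↦ {a ∈ s | P b a} := by
    intro b _ b' _ hbb'
    simp only [Function.onFun, disjoint_left, mem_filter]
    exact fun a ha ha' ↦ hbb' (hP b b' a ha.2 ha'.2)
  have hcover : 2 * #t ≤ #s :=
    calc 2 * #t = ∑ _ ∈ t, 2 := by rw [sum_const, smul_eq_mul, mul_comm]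
      _ ≤ ∑ b ∈ t, #{a ∈ s | P b a} := sum_le_sum htwo
      _ = #(t.biUnion fun b ↦ {a ∈ s | P b a}) := (card_biUnion hdisj).symm
      _ ≤ #s := card_le_card (biUnion_subset.2 fun _ _ ↦ filter_subset _ _)
  have := le_card_sdiff (t.image r) s
  have := card_image_le (s := t) (f := r)
  omega

namespace SimpleGraph

variable {V : Type*}

def avoiding (G : SimpleGraph V) (W : Set V) : SimpleGraph V where
  Adj a b := G.Adj a b ∧ a ∉ W ∧ b ∉ W
  symm := ⟨fun _ _ h ↦ ⟨h.1.symm, h.2.2, h.2.1⟩⟩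
  loopless := ⟨fun a h ↦ G.loopless.irrefl a h.1⟩

def IsExitEdge (G : SimpleGraph V) (W : Set V) (c : (G.avoiding W).ConnectedComponent)
    (e : Sym2 V) : Prop :=
  ∃ a b, e = s(a, b) ∧ G.Adj a b ∧ a ∉ W ∧ b ∈ W ∧ (G.avoiding W).connectedComponentMk a = c

variable {G : SimpleGraph V} {W : Set V} {c c' : (G.avoiding W).ConnectedComponent} {e : Sym2 V}

lemma IsExitEdge.mem_edgeSet (h : G.IsExitEdge W c e) : e ∈ G.edgeSet := by
  obtain ⟨a, b, rfl, hab, -⟩ := h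
  exact hab

lemma IsExitEdge.unique (h : G.IsExitEdge W c e) (h' : G.IsExitEdge W c' e) : c = c' := by
  obtain ⟨a, b, rfl, -, haW, hbW, rfl⟩ := h
  obtain ⟨a', b', heq, -, haW', hbW', rfl⟩ := h'
  rcases Sym2.eq_iff.1 heq with ⟨rfl, -⟩ | ⟨-, rfl⟩
  · rfl
  · exact absurd hbW haW'

lemma Walk.exists_isExitEdge_mem_edges {u v : V} (p : G.Walk u v) (hu : u ∉ W) (hv : v ∈ W) :
    ∃ e ∈ p.edges, G.IsExitEdge W ((G.avoiding W).connectedComponentMk u) e := by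
  induction p with
  | nil => exact absurd hv hu
  | @cons u x v hux q ih =>
    by_cases hx : x ∈ W
    · exact ⟨s(u, x), by simp, u, x, rfl, hux, hu, hx, rfl⟩
    · obtain ⟨e, he, hexit⟩ := ih hx hv
      have hsame : (G.avoiding W).connectedComponentMk x = (G.avoiding W).connectedComponentMk u :=
        ConnectedComponent.sound (show (G.avoiding W).Adj u x from ⟨hux, hu, hx⟩).reachable.symm
      exact ⟨e, by simp [he], hsame ▸ hexit⟩

lemma IsExitEdge.exists_ne_of_isCycleEdge (h : G.IsExitEdge W c e) (hcyc : G.IsCycleEdge e) :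
    ∃ f ≠ e, G.IsExitEdge W c f := by
  obtain ⟨a, b, rfl, -, haW, hbW, rfl⟩ := h
  obtain ⟨-, hreach⟩ := adj_and_reachable_delete_edges_iff_exists_cycle.2 hcyc
  obtain ⟨p, hp⟩ := reachable_deleteEdges_iff_exists_walk.1 hreach
  obtain ⟨f, hfp, hf⟩ := p.exists_isExitEdge_mem_edges haW hbW
  exact ⟨f, fun hfe ↦ hp (hfe ▸ hfp), hf⟩

lemma Subgraph.Connected.reachable_deleteEdges {G' : G.Subgraph} (hG' : G'.Connected)
    {T : Set (Sym2 V)} (hT : Disjoint G'.edgeSet T) {x y : V} (hx : x ∈ G'.verts)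
    (hy : y ∈ G'.verts) : (G.deleteEdges T).Reachable x y :=
  let toDeleteEdges : G'.coe →g G.deleteEdges T :=
    ⟨Subtype.val, fun h ↦ (SimpleGraph.deleteEdges_adj ..).2 ⟨h.adj_sub, hT.notMem_of_mem_left h⟩⟩
  (hG'.preconnected ⟨x, hx⟩ ⟨y, hy⟩).map toDeleteEdges

lemma avoiding_le_deleteEdges {T : Set (Sym2 V)} (hT : ∀ e ∈ T, ∃ v ∈ W, v ∈ e) :
    G.avoiding W ≤ G.deleteEdges T := by
  rintro x y ⟨hxy, hx, hy⟩
  refine (deleteEdges_adj ..).2 ⟨hxy, fun h ↦ ?_⟩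
  obtain ⟨v, hvW, hv⟩ := hT _ h
  rcases Sym2.mem_iff.1 hv with rfl | rfl
  exacts [hx hvW, hy hvW]

lemma Connected.connected_deleteEdges_of_forall_isExitEdge (hG : G.Connected) {T : Set (Sym2 V)}
    (hT : ∀ e ∈ T, ∃ v ∈ W, v ∈ e) {w : V} (hw : w ∈ W)
    (hW : ∀ x ∈ W, ∀ y ∈ W, (G.deleteEdges T).Reachable x y)
    (hexit : ∀ c e, G.IsExitEdge W c e → ∃ f ∉ T, G.IsExitEdge W c f) :
    (G.deleteEdges T).Connected := by
  have hle := avoiding_le_deleteEdges (G := G) hT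
  have hreach : ∀ v, (G.deleteEdges T).Reachable v w := by
    intro v
    by_cases hv : v ∈ W
    · exact hW v hv w hw
    obtain ⟨e, -, he⟩ := (hG.preconnected v w).some.exists_isExitEdge_mem_edges hv hw
    obtain ⟨f, hfT, a, b, rfl, hab, -, hbW, hcomp⟩ := hexit _ e he
    have hva := (ConnectedComponent.exact hcomp.symm).mono hle
    have hab' : (G.deleteEdges T).Adj a b := (deleteEdges_adj ..).2 ⟨hab, hfT⟩
    exact hva.trans (hab'.reachable.trans (hW b hbW w hw))
  have : Nonempty V := ⟨w⟩
  exact ⟨fun u v ↦ (hreach u).trans (hreach v).symm⟩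

end SimpleGraph

open SimpleGraph

theorem stmt_1_general {V : Type*} [Fintype V] (G : SimpleGraph V)
    (hG : G.Connected) (G' : G.Subgraph) (hG' : G'.Connected)
    (S : Finset (Sym2 V))
    (hS : ∀ e ∈ S, G.IsCycleEdge e ∧ e ∉ G'.edgeSet ∧ ∃ v ∈ G'.verts, v ∈ e) :
    ∃ S' ⊆ S, S.card ≤ 2 * S'.card ∧ (G.deleteEdges (S' : Set (Sym2 V))).Connected := by
  classical
  obtain ⟨w, hw⟩ := hG'.nonempty
  set W := G'.verts
  let ExitsInS : (G.avoiding W).ConnectedComponent → Prop := fun c ↦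
    (∃ e, G.IsExitEdge W c e) ∧ ∀ e, G.IsExitEdge W c e → e ∈ S
  choose keep hkeep using fun c ↦ show ∃ e, ExitsInS c → G.IsExitEdge W c e from
    if hc : ExitsInS c then hc.1.imp fun _ h _ ↦ h else ⟨s(w, w), fun h ↦ absurd h hc⟩
  refine ⟨S \ image keep {c | ExitsInS c}, sdiff_subset, ?_, ?_⟩
  · refine card_le_two_mul_card_sdiff_image keep (G.IsExitEdge W) (fun _ _ _ ↦ IsExitEdge.unique)
      fun c hmem ↦ ?_
    have hc : ExitsInS c := (mem_filter.1 hmem).2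
    have hkeepS := hc.2 _ (hkeep c hc)
    obtain ⟨f, hf, hfc⟩ := (hkeep c hc).exists_ne_of_isCycleEdge (hS _ hkeepS).1
    exact one_lt_card.2 ⟨f, mem_filter.2 ⟨hc.2 f hfc, hfc⟩, keep c,
      mem_filter.2 ⟨hkeepS, hkeep c hc⟩, hf⟩
  · refine hG.connected_deleteEdges_of_forall_isExitEdge
      (fun e he ↦ (hS e (mem_sdiff.1 he).1).2.2) hw
      (fun x hx y hy ↦ hG'.reachable_deleteEdges ?_ hx hy) fun c e he ↦ ?_
    · exact Set.disjoint_left.2 fun e he hS' ↦ (hS e (mem_sdiff.1 hS').1).2.1 he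
    by_cases hc : ExitsInS c
    · refine ⟨keep c, fun h ↦ (mem_sdiff.1 h).2 ?_, hkeep c hc⟩
      exact mem_image_of_mem keep (mem_filter.2 ⟨mem_univ _, hc⟩)
    · obtain ⟨f, hf, hfS⟩ := not_forall₂.1 (not_and.1 hc ⟨e, he⟩)
      exact ⟨f, fun h ↦ hfS (mem_sdiff.1 h).1, hf⟩

/-- Let `G` be a connected graph, `G'` a connected subgraph, and `S` a
collection of cycle edges of `G` not contained in `G'` but incident to the vertex set of `G'`.
Then there is `S' ⊆ S` with `|S'| ≥ |S|/2` such that removing the edges of `S'` from `G`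
keeps it connected. -/
theorem stmt_1 {V : Type*} [Fintype V] [DecidableEq V] (G : SimpleGraph V)
    (hG : G.Connected) (G' : G.Subgraph) (hG' : G'.Connected)
    (S : Finset (Sym2 V))
    (hS : ∀ e ∈ S, G.IsCycleEdge e ∧ e ∉ G'.edgeSet ∧ ∃ v ∈ G'.verts, v ∈ e) :
    ∃ S' ⊆ S, S.card ≤ 2 * S'.card ∧ (G.deleteEdges (S' : Set (Sym2 V))).Connected :=
  stmt_1_general G hG G' hG' S hS
end

section
/- There exists a universal constant C > 0 such that the following holds. Let G = (V, E) be a connected ℓ-tangle free graph with ℓ ≥ 5, let G̃ = (Ṽ, Ẽ) be a connected subgraph of G with diameter at most (ℓ−2)/3, and let S be the collection of all cycle edges of G incident to Ṽ but not contained in Ẽ. Then |S| ≤ 6 + 16|E|/ℓ. -/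
/-- A graph `G` is `ℓ`-*tangle free* if every ball of radius `ℓ` contains at most one cycle:
any two cycles whose vertices all lie within distance `ℓ` of a common vertex have the same
edge set. -/
def SimpleGraph.TangleFree {V : Type*} (G : SimpleGraph V) (ℓ : ℕ) : Prop :=
  ∀ (v u₁ u₂ : V) (c₁ : G.Walk u₁ u₁) (c₂ : G.Walk u₂ u₂),
    c₁.IsCycle → c₂.IsCycle →
    (∀ x ∈ c₁.support, G.dist v x ≤ ℓ) → (∀ x ∈ c₂.support, G.dist v x ≤ ℓ) →
    (∀ e, e ∈ c₁.edges ↔ e ∈ c₂.edges)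

namespace SimpleGraph

variable {V : Type*}

theorem IsAcyclic.card_edgeSet_lt [Finite V] [Nonempty V] {H : SimpleGraph V}
    (h : H.IsAcyclic) : Nat.card H.edgeSet < Nat.card V := by
  obtain ⟨F, hHF, -, hF⟩ := connected_top.exists_isTree_le_of_le_of_isAcyclic le_top h
  have hcard := (isTree_iff_connected_and_card.mp hF).2
  have : Nat.card H.edgeSet ≤ Nat.card F.edgeSet :=
    Nat.card_mono (Set.toFinite _) (edgeSet_mono hHF)
  omega

theorem exists_isCycle_mem_edges_notMem_edges [Finite V] {H : SimpleGraph V}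
    (h : Nat.card V < Nat.card H.edgeSet) :
    ∃ (u : V) (c₁ : H.Walk u u) (w : V) (c₂ : H.Walk w w) (e : Sym2 V),
      c₁.IsCycle ∧ c₂.IsCycle ∧ e ∈ c₁.edges ∧ e ∉ c₂.edges := by
  have not_acyclic : ∀ {K : SimpleGraph V}, Nat.card V ≤ Nat.card K.edgeSet → ¬ K.IsAcyclic := by
    intro K hK hac
    obtain ⟨⟨e, he⟩⟩ := Nat.card_pos_iff.mp (Nat.zero_lt_of_lt h)
    have : Nonempty V := ⟨e.out.1⟩
    exact (hac.card_edgeSet_lt.trans_le hK).false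
  obtain ⟨u, c₁, hc₁⟩ : ∃ (u : V) (c₁ : H.Walk u u), c₁.IsCycle := by
    simpa [IsAcyclic] using not_acyclic h.le
  obtain ⟨e, he⟩ := List.exists_mem_of_ne_nil _ (Walk.edges_eq_nil.not.mpr hc₁.not_nil)
  have hdel : Nat.card (H.deleteEdges {e}).edgeSet + 1 = Nat.card H.edgeSet := by
    rw [edgeSet_deleteEdges, Nat.card_coe_set_eq, Nat.card_coe_set_eq,
      Set.ncard_sdiff_singleton_add_one (c₁.edges_subset_edgeSet he)]
  obtain ⟨w, c₂, hc₂⟩ : ∃ (w : V) (c₂ : (H.deleteEdges {e}).Walk w w), c₂.IsCycle := by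
    simpa [IsAcyclic] using not_acyclic (K := H.deleteEdges {e}) (by omega)
  refine ⟨u, c₁, w, c₂.mapLe (deleteEdges_le _), e, hc₁, hc₂.mapLe _, he, fun he₂ => ?_⟩
  rw [Walk.edges_mapLe_eq_edges] at he₂
  simpa using c₂.edges_subset_edgeSet he₂

namespace Subgraph

variable {G : SimpleGraph V}

noncomputable def excess (H : G.Subgraph) : ℤ := H.edgeSet.ncard - H.verts.ncard

theorem card_coe_edgeSet (H : G.Subgraph) : Nat.card H.coe.edgeSet = H.edgeSet.ncard := by
  rw [Nat.card_coe_set_eq, ← H.image_coe_edgeSet_coe,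
    Set.ncard_image_of_injective _ (Sym2.map.injective Subtype.val_injective)]

theorem Connected.neg_one_le_excess {H : G.Subgraph} (hH : H.Connected) : -1 ≤ H.excess := by
  have := hH.coe.card_vert_le_card_edgeSet_add_one
  rw [card_coe_edgeSet, Nat.card_coe_set_eq] at this
  unfold excess
  omega

theorem excess_nonpos_of_tangleFree [Finite V] {ℓ : ℕ} (hTF : G.TangleFree ℓ) {v : V}
    {H : G.Subgraph} (hH : ∀ x ∈ H.verts, G.dist v x ≤ ℓ) : H.excess ≤ 0 := by
  by_contra hpos
  have hlt : Nat.card H.verts < Nat.card H.coe.edgeSet := by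
    rw [card_coe_edgeSet, Nat.card_coe_set_eq]
    unfold excess at hpos
    omega
  obtain ⟨u, c₁, w, c₂, e, hc₁, hc₂, he₁, he₂⟩ := exists_isCycle_mem_edges_notMem_edges hlt
  have hball (x : H.verts) (c : H.coe.Walk x x) : ∀ y ∈ (c.map H.hom).support, G.dist v y ≤ ℓ := by
    intro y hy
    rw [Walk.support_map, List.mem_map] at hy
    obtain ⟨y, -, rfl⟩ := hy
    exact hH y y.2
  have hiff := hTF v (H.hom u) (H.hom w) (c₁.map H.hom) (c₂.map H.hom) (hc₁.map H.hom_injective)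
    (hc₂.map H.hom_injective) (hball u c₁) (hball w c₂) (e.map Subtype.val)
  rw [Walk.edges_map, Walk.edges_map, List.mem_map, List.mem_map] at hiff
  obtain ⟨e', he', hee'⟩ := hiff.mp ⟨e, he₁, rfl⟩
  rw [Sym2.map.injective Subtype.val_injective hee'] at he'
  exact he₂ he'

variable {H : G.Subgraph} {u v : V}

theorem verts_sup_subgraphOfAdj (h : G.Adj u v) (hu : u ∈ H.verts) :
    (H ⊔ G.subgraphOfAdj h).verts = insert v H.verts := by
  ext x
  simp only [verts_sup, subgraphOfAdj_verts, Set.mem_union, Set.mem_insert_iff,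
    Set.mem_singleton_iff]
  grind

theorem edgeSet_sup_subgraphOfAdj (h : G.Adj u v) :
    (H ⊔ G.subgraphOfAdj h).edgeSet = insert s(u, v) H.edgeSet := by
  rw [edgeSet_sup, edgeSet_subgraphOfAdj, Set.union_singleton]

variable [Finite V]

theorem excess_sup_subgraphOfAdj_of_notMem (h : G.Adj u v) (hu : u ∈ H.verts)
    (hv : v ∉ H.verts) : (H ⊔ G.subgraphOfAdj h).excess = H.excess := by
  have he : s(u, v) ∉ H.edgeSet := fun he => hv (H.edge_vert (H.mem_edgeSet.mp he).symm)
  simp only [excess, verts_sup_subgraphOfAdj h hu, edgeSet_sup_subgraphOfAdj,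
    Set.ncard_insert_of_notMem he, Set.ncard_insert_of_notMem hv]
  push_cast
  ring

theorem excess_sup_subgraphOfAdj_of_mem (h : G.Adj u v) (hu : u ∈ H.verts)
    (hv : v ∈ H.verts) (he : s(u, v) ∉ H.edgeSet) :
    (H ⊔ G.subgraphOfAdj h).excess = H.excess + 1 := by
  simp only [excess, verts_sup_subgraphOfAdj h hu, edgeSet_sup_subgraphOfAdj,
    Set.ncard_insert_of_notMem he, Set.insert_eq_of_mem hv]
  push_cast
  ring

theorem excess_le_excess_sup_subgraphOfAdj (h : G.Adj u v) (hu : u ∈ H.verts) :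
    H.excess ≤ (H ⊔ G.subgraphOfAdj h).excess := by
  by_cases hv : v ∈ H.verts
  · by_cases he : s(u, v) ∈ H.edgeSet
    · rw [sup_eq_left.mpr (subgraphOfAdj_le_of_adj H he)]
    · rw [excess_sup_subgraphOfAdj_of_mem h hu hv he]
      omega
  · rw [excess_sup_subgraphOfAdj_of_notMem h hu hv]

theorem excess_le_excess_sup_toSubgraph {w : V} (p : G.Walk u w) (hu : u ∈ H.verts) :
    H.excess ≤ (H ⊔ p.toSubgraph).excess := by
  induction p generalizing H with
  | nil => rw [Walk.toSubgraph, sup_eq_left.mpr ((singletonSubgraph_le_iff _ _).mpr hu)]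
  | cons h p ih =>
    rw [Walk.toSubgraph, ← sup_assoc]
    exact (excess_le_excess_sup_subgraphOfAdj h hu).trans
      (ih (by rw [verts_sup_subgraphOfAdj h hu]; exact Set.mem_insert _ _))

theorem excess_add_one_le_or_card_edgeSet_eq {w : V} (h : G.Adj u v) (p : G.Walk v w)
    (hu : u ∈ H.verts) (he : s(u, v) ∉ H.edgeSet) (hp : (Walk.cons h p).edges.Nodup) :
    H.excess + 1 ≤ (H ⊔ (Walk.cons h p).toSubgraph).excess ∨
      (w ∉ H.verts ∧ (H ⊔ (Walk.cons h p).toSubgraph).edgeSet.ncard =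
        H.edgeSet.ncard + (Walk.cons h p).length) := by
  induction p generalizing u H with
  | @nil v =>
    rw [Walk.toSubgraph_cons_nil_eq_subgraphOfAdj]
    by_cases hv : v ∈ H.verts
    · exact .inl (excess_sup_subgraphOfAdj_of_mem h hu hv he).ge
    · refine .inr ⟨hv, ?_⟩
      rw [edgeSet_sup_subgraphOfAdj, Set.ncard_insert_of_notMem he, Walk.length_cons,
        Walk.length_nil]
  | @cons v x w h' p ih =>
    rw [Walk.toSubgraph, ← sup_assoc]
    have hv₁ : v ∈ (H ⊔ G.subgraphOfAdj h).verts := by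
      rw [verts_sup_subgraphOfAdj h hu]; exact Set.mem_insert _ _
    by_cases hv : v ∈ H.verts
    · left
      rw [← excess_sup_subgraphOfAdj_of_mem h hu hv he]
      exact excess_le_excess_sup_toSubgraph _ hv₁
    · have he' : s(v, x) ∉ (H ⊔ G.subgraphOfAdj h).edgeSet := by
        rw [edgeSet_sup_subgraphOfAdj, Set.mem_insert_iff, not_or]
        refine ⟨fun hvx => ?_, fun hvx => hv (H.edge_vert (H.mem_edgeSet.mp hvx))⟩
        rw [Walk.edges_cons, Walk.edges_cons, hvx] at hp
        simp at hp
      rcases ih h' hv₁ he' (List.nodup_cons.mp hp).2 with hlt | ⟨hw, hE⟩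
      · rw [excess_sup_subgraphOfAdj_of_notMem h hu hv] at hlt
        exact .inl hlt
      · refine .inr ⟨fun hwH => hw (by rw [verts_sup_subgraphOfAdj h hu]; exact .inr hwH), ?_⟩
        rw [hE, edgeSet_sup_subgraphOfAdj, Set.ncard_insert_of_notMem he]
        simp only [Walk.length_cons]
        ring

end Subgraph

namespace Walk

variable {G : SimpleGraph V}

theorem exists_eq_append_first_hit (Q : V → Prop) {u w : V} (q : G.Walk u w) (hw : Q w) :
    ∃ (z : V) (t : G.Walk u z) (s : G.Walk z w),
      q = t.append s ∧ Q z ∧ ∀ x ∈ t.support, Q x → x = z := by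
  classical
  induction q with
  | @nil u => exact ⟨u, nil, nil, rfl, hw, by simp⟩
  | @cons u v w h p ih =>
    by_cases hu : Q u
    · exact ⟨u, nil, cons h p, rfl, hu, by simp⟩
    · obtain ⟨z, t, s, rfl, hz, ht⟩ := ih hw
      refine ⟨z, cons h t, s, rfl, hz, ?_⟩
      intro x hx hQx
      rcases List.mem_cons.mp hx with rfl | hx
      · exact absurd hQx hu
      · exact ht x hx hQx

theorem dist_le_of_forall_ne_end (hG : G.Connected) {v a z : V} {n : ℕ} (W : G.Walk a z)
    (hW : ¬ W.Nil) (h : ∀ x ∈ W.support, x ≠ z → G.dist v x < n) :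
    ∀ x ∈ W.support, G.dist v x ≤ n := by
  intro x hx
  by_cases hxz : x = z
  · subst hxz
    have hadj := adj_penultimate hW
    have hpen := h _ (List.mem_of_mem_dropLast (penultimate_mem_dropLast_support hW)) hadj.ne
    have := hG.dist_triangle (u := v) (v := W.penultimate) (w := x)
    rw [dist_eq_one_iff_adj.mpr hadj] at this
    omega
  · exact (h x hx hxz).le

end Walk

theorem IsCycleEdge.exists_isPath {G : SimpleGraph V} {a b : V} (h : G.IsCycleEdge s(a, b)) :
    ∃ (_ : G.Adj a b) (q : G.Walk b a), q.IsPath ∧ s(a, b) ∉ q.edges := by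
  obtain ⟨hab, hreach⟩ := adj_and_reachable_delete_edges_iff_exists_cycle.mpr h
  obtain ⟨q, hq⟩ := hreach.symm.exists_isPath
  refine ⟨hab, q.mapLe (deleteEdges_le _), hq.mapLe _, fun he => ?_⟩
  rw [Walk.edges_mapLe_eq_edges] at he
  simpa using q.edges_subset_edgeSet he

namespace Subgraph

variable {G : SimpleGraph V}

theorem dist_le_dist_coe {G' : G.Subgraph} {x y : G'.verts} (h : G'.coe.Reachable x y) :
    G.dist x y ≤ G'.coe.dist x y := by
  obtain ⟨w, hw⟩ := h.exists_walk_length_eq_dist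
  rw [← hw, ← w.length_map G'.hom]
  exact dist_le _

theorem Connected.three_mul_dist_add_two_le {G' : G.Subgraph} (hG' : G'.Connected) {ℓ : ℕ}
    (hdiam : ∀ x y : G'.verts, (G'.coe.dist x y : ℝ) ≤ ((ℓ : ℝ) - 2) / 3) {v a : V}
    (hv : v ∈ G'.verts) (ha : a ∈ G'.verts) : 3 * G.dist v a + 2 ≤ ℓ := by
  have hle : (G.dist v a : ℝ) ≤ G'.coe.dist ⟨v, hv⟩ ⟨a, ha⟩ := by
    exact_mod_cast dist_le_dist_coe (hG'.coe.preconnected ⟨v, hv⟩ ⟨a, ha⟩)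
  have : (3 * G.dist v a + 2 : ℝ) ≤ ℓ := by linarith [hdiam ⟨v, hv⟩ ⟨a, ha⟩]
  exact_mod_cast this

variable (G' : G.Subgraph) (v₀ : V) (ℓ : ℕ)

def incidentEdgesOutside : Set (Sym2 V) := {e | e ∉ G'.edgeSet ∧ ∃ v ∈ G'.verts, v ∈ e}

/-- The edge `s(a, b)` leaving `G'`, followed by a path `t` from `b` that stops as soon as it
returns to `G'` or reaches distance `ℓ` from `v₀`. -/
structure IsExcursion {a b z : V} (hab : G.Adj a b) (t : G.Walk b z) : Prop where
  start_mem : a ∈ G'.verts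
  isPath : t.IsPath
  edge_notMem : s(a, b) ∉ t.edges
  dist_le : ∀ x ∈ (Walk.cons hab t).support, G.dist v₀ x ≤ ℓ
  eq_end_of_mem : ∀ x ∈ t.support, x ∈ G'.verts → x = z
  length_ge : z ∉ G'.verts → 2 * ℓ ≤ 3 * (Walk.cons hab t).length

variable {G' v₀ ℓ}

theorem exists_isExcursion (hG : G.Connected) (hd : ∀ a ∈ G'.verts, 3 * G.dist v₀ a + 2 ≤ ℓ)
    {a b : V} (h : G.IsCycleEdge s(a, b)) (ha : a ∈ G'.verts) :
    ∃ (z : V) (hab : G.Adj a b) (t : G.Walk b z), G'.IsExcursion v₀ ℓ hab t := by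
  obtain ⟨hab, q, hq, hnot⟩ := h.exists_isPath
  obtain ⟨z, t, s, rfl, hz, ht⟩ := q.exists_eq_append_first_hit
    (fun x => x ∈ G'.verts ∨ ℓ ≤ G.dist v₀ x) (.inl ha)
  have hda := hd a ha
  have hdist := Walk.dist_le_of_forall_ne_end hG (Walk.cons hab t) Walk.not_nil_cons
    (n := ℓ) (v := v₀) fun x hx hxz => by
      rcases List.mem_cons.mp hx with rfl | hx
      · omega
      · exact lt_of_not_ge fun hle => hxz (ht x hx (.inr hle))
  refine ⟨z, hab, t, ha, hq.of_append_left,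
    fun he => hnot (by rw [Walk.edges_append]; exact List.mem_append_left _ he), hdist,
    fun x hx hxG => ht x hx (.inl hxG), fun hzG => ?_⟩
  have hℓz := hz.resolve_left hzG
  have := hG.dist_triangle (u := v₀) (v := a) (w := z)
  have := dist_le (Walk.cons hab t)
  omega

section IsExcursion

variable {a b z : V} {hab : G.Adj a b} {t : G.Walk b z}

theorem IsExcursion.mem_incidentEdgesOutside (hW : G'.IsExcursion v₀ ℓ hab t) {f : Sym2 V}
    (hf : f ∈ (Walk.cons hab t).edges) (hfo : f ∈ G'.incidentEdgesOutside) :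
    f = s(a, b) ∨ (z ∈ G'.verts ∧ f = s(z, t.penultimate)) := by
  rcases List.mem_cons.mp hf with rfl | hf
  · exact .inl rfl
  obtain ⟨-, x, hxG, hxf⟩ := hfo
  obtain ⟨y, rfl⟩ := Sym2.mem_iff_exists.mp hxf
  obtain rfl := hW.eq_end_of_mem x (t.fst_mem_support_of_mem_edges hf) hxG
  exact .inr ⟨hxG, by rw [hW.isPath.eq_penultimate_of_mem_edges hf]⟩

theorem IsExcursion.ncard_edgeSet_inter_le_two (hW : G'.IsExcursion v₀ ℓ hab t) :
    ((Walk.cons hab t).edgeSet ∩ G'.incidentEdgesOutside).ncard ≤ 2 := by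
  have hsub : (Walk.cons hab t).edgeSet ∩ G'.incidentEdgesOutside ⊆
      {s(a, b), s(z, t.penultimate)} := by
    rintro f ⟨hf, hfo⟩
    rcases hW.mem_incidentEdgesOutside hf hfo with rfl | ⟨-, rfl⟩ <;> simp
  exact (Set.ncard_le_ncard hsub).trans
    ((Set.ncard_insert_le _ _).trans (by rw [Set.ncard_singleton]))

theorem IsExcursion.ncard_edgeSet_inter_le_one (hW : G'.IsExcursion v₀ ℓ hab t)
    (hz : z ∉ G'.verts) :
    ((Walk.cons hab t).edgeSet ∩ G'.incidentEdgesOutside).ncard ≤ 1 := by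
  have hsub : (Walk.cons hab t).edgeSet ∩ G'.incidentEdgesOutside ⊆ {s(a, b)} := by
    rintro f ⟨hf, hfo⟩
    rcases hW.mem_incidentEdgesOutside hf hfo with rfl | ⟨hzG, -⟩
    · rfl
    · exact absurd hzG hz
  exact (Set.ncard_le_ncard hsub).trans (Set.ncard_singleton _).le

end IsExcursion

theorem ncard_edgeSet_sup_inter_le (P K : G.Subgraph) (s : Set (Sym2 V)) :
    ((P ⊔ K).edgeSet ∩ s).ncard ≤ (P.edgeSet ∩ s).ncard + (K.edgeSet ∩ s).ncard := by
  rw [edgeSet_sup, Set.union_inter_distrib_right]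
  exact Set.ncard_union_le _ _

variable (G' v₀ ℓ) in
/-- The counting invariant of the proof: every unit of excess gained over `G'` pays for two edges
of `P` leaving `G'`, and every other such edge comes with an edge-disjoint excursion of length at
least `2ℓ/3`. -/
structure IsAdmissible (P : G.Subgraph) (m : ℕ) : Prop where
  le : G' ≤ P
  dist_le : ∀ x ∈ P.verts, G.dist v₀ x ≤ ℓ
  ncard_inter_le : ((P.edgeSet ∩ G'.incidentEdgesOutside).ncard : ℤ) ≤
    2 * (P.excess - G'.excess) + m
  mul_le : 2 * ℓ * m ≤ 3 * P.edgeSet.ncard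

theorem isAdmissible_self (hd : ∀ a ∈ G'.verts, 3 * G.dist v₀ a + 2 ≤ ℓ) :
    G'.IsAdmissible v₀ ℓ G' 0 where
  le := le_rfl
  dist_le x hx := by have := hd x hx; omega
  ncard_inter_le := by
    have : G'.edgeSet ∩ G'.incidentEdgesOutside = ∅ :=
      Set.eq_empty_of_forall_notMem fun f hf => hf.2.1 hf.1
    simp [this]
  mul_le := by simp

theorem IsAdmissible.sup_excursion [Finite V] {P : G.Subgraph} {m : ℕ}
    (hP : G'.IsAdmissible v₀ ℓ P m) {a b z : V} {hab : G.Adj a b} {t : G.Walk b z}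
    (hW : G'.IsExcursion v₀ ℓ hab t) (he : s(a, b) ∉ P.edgeSet) :
    ∃ m', G'.IsAdmissible v₀ ℓ (P ⊔ (Walk.cons hab t).toSubgraph) m' := by
  have haP : a ∈ P.verts := hP.le.1 hW.start_mem
  have hnodup : (Walk.cons hab t).edges.Nodup :=
    List.nodup_cons.mpr ⟨hW.edge_notMem, hW.isPath.isTrail.edges_nodup⟩
  have hcases := excess_add_one_le_or_card_edgeSet_eq hab t haP he hnodup
  have hX := ncard_edgeSet_sup_inter_le P (Walk.cons hab t).toSubgraph G'.incidentEdgesOutside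
  rw [Walk.edgeSet_toSubgraph] at hX
  have hle : G' ≤ P ⊔ (Walk.cons hab t).toSubgraph := hP.le.trans le_sup_left
  have hdist : ∀ x ∈ (P ⊔ (Walk.cons hab t).toSubgraph).verts, G.dist v₀ x ≤ ℓ := by
    rintro x (hx | hx)
    · exact hP.dist_le x hx
    · exact hW.dist_le x ((Walk.mem_verts_toSubgraph _).mp hx)
  rcases hcases with hexc | ⟨hz, hE⟩
  · refine ⟨m, hle, hdist, ?_, ?_⟩
    · have := hP.ncard_inter_le
      have := hW.ncard_edgeSet_inter_le_two
      omega
    · have : P.edgeSet.ncard ≤ (P ⊔ (Walk.cons hab t).toSubgraph).edgeSet.ncard :=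
        Set.ncard_le_ncard (by rw [edgeSet_sup]; exact Set.subset_union_left)
      have := hP.mul_le
      omega
  · have hzG : z ∉ G'.verts := fun h => hz (hP.le.1 h)
    refine ⟨m + 1, hle, hdist, ?_, ?_⟩
    · have := hP.ncard_inter_le
      have := hW.ncard_edgeSet_inter_le_one hzG
      have := excess_le_excess_sup_toSubgraph (Walk.cons hab t) haP
      push_cast
      omega
    · have := hP.mul_le
      have := hW.length_ge hzG
      rw [hE]
      nlinarith

theorem exists_isAdmissible_superset [Finite V] (hG : G.Connected)
    (hd : ∀ a ∈ G'.verts, 3 * G.dist v₀ a + 2 ≤ ℓ) (F : Finset (Sym2 V))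
    (hF : ↑F ⊆ {e | G.IsCycleEdge e} ∩ G'.incidentEdgesOutside) :
    ∃ P m, G'.IsAdmissible v₀ ℓ P m ∧ ↑F ⊆ P.edgeSet := by
  classical
  induction F using Finset.induction_on with
  | empty => exact ⟨G', 0, isAdmissible_self hd, by simp⟩
  | insert e F _ ih =>
    rw [Finset.coe_insert, Set.insert_subset_iff] at hF
    obtain ⟨P, m, hP, hFP⟩ := ih hF.2
    rw [Finset.coe_insert]
    by_cases heP : e ∈ P.edgeSet
    · exact ⟨P, m, hP, Set.insert_subset heP hFP⟩
    obtain ⟨hcyc, -, a, ha, hae⟩ := hF.1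
    obtain ⟨b, rfl⟩ := Sym2.mem_iff_exists.mp hae
    obtain ⟨z, hab, t, hW⟩ := exists_isExcursion hG hd hcyc ha
    obtain ⟨m', hP'⟩ := hP.sup_excursion hW heP
    refine ⟨_, m', hP', Set.insert_subset ?_ (hFP.trans ?_)⟩ <;> rw [edgeSet_sup]
    · exact .inr (by simp)
    · exact Set.subset_union_left

theorem IsAdmissible.ncard_inter_le_two_add [Finite V] (hTF : G.TangleFree ℓ)
    (hG' : G'.Connected) {P : G.Subgraph} {m : ℕ} (hP : G'.IsAdmissible v₀ ℓ P m) :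
    (P.edgeSet ∩ G'.incidentEdgesOutside).ncard ≤ 2 + m := by
  have := hP.ncard_inter_le
  have := excess_nonpos_of_tangleFree hTF hP.dist_le
  have := hG'.neg_one_le_excess
  omega

end Subgraph

end SimpleGraph

open SimpleGraph Subgraph in
theorem stmt_2_general {V : Type*} [Fintype V] (G : SimpleGraph V)
    [DecidableRel G.Adj] (ℓ : ℕ)
    (hG : G.Connected) (hTF : G.TangleFree ℓ)
    (G' : G.Subgraph) (hG'conn : G'.Connected)
    (hdiam : ∀ x y : G'.verts, (G'.coe.dist x y : ℝ) ≤ ((ℓ : ℝ) - 2) / 3) :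
    (({e | G.IsCycleEdge e ∧ e ∉ G'.edgeSet ∧ ∃ v ∈ G'.verts, v ∈ e}).ncard : ℝ)
      ≤ 6 + 16 * G.edgeFinset.card / ℓ := by
  obtain ⟨v₀, hv₀⟩ := hG'conn.nonempty
  have hd : ∀ a ∈ G'.verts, 3 * G.dist v₀ a + 2 ≤ ℓ :=
    fun a ha => hG'conn.three_mul_dist_add_two_le hdiam hv₀ ha
  set S := {e | G.IsCycleEdge e ∧ e ∉ G'.edgeSet ∧ ∃ v ∈ G'.verts, v ∈ e}
  have hS : S = {e | G.IsCycleEdge e} ∩ G'.incidentEdgesOutside := rfl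
  obtain ⟨P, m, hP, hSP⟩ := exists_isAdmissible_superset hG hd (Set.toFinite S).toFinset
    (by rw [Set.Finite.coe_toFinset, hS])
  rw [Set.Finite.coe_toFinset] at hSP
  have hcard : S.ncard ≤ 2 + m :=
    (Set.ncard_le_ncard (Set.subset_inter hSP (hS ▸ Set.inter_subset_right))).trans
      (hP.ncard_inter_le_two_add hTF hG'conn)
  have hE : P.edgeSet.ncard ≤ G.edgeFinset.card := by
    rw [← Set.ncard_coe_finset, coe_edgeFinset]
    exact Set.ncard_le_ncard P.edgeSet_subset
  have hℓ : (2 : ℝ) ≤ ℓ := by exact_mod_cast (by simpa using hd v₀ hv₀ : 2 ≤ ℓ)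
  have hm : (2 * ℓ * m : ℝ) ≤ 3 * G.edgeFinset.card := by
    exact_mod_cast hP.mul_le.trans (by omega)
  have hm' : (m : ℝ) ≤ 16 * G.edgeFinset.card / ℓ := by
    rw [le_div_iff₀ (by linarith)]
    nlinarith
  have : (S.ncard : ℝ) ≤ 2 + m := by exact_mod_cast hcard
  linarith

/-- Let `G` be a connected `ℓ`-tangle free graph with `ℓ ≥ 5`, `G'` a connected
subgraph of diameter at most `(ℓ-2)/3`, and `S` the set of all cycle edges of `G` incident to the
vertices of `G'` but not contained in `G'`. Then `|S| ≤ 6 + 16|E|/ℓ`. -/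
theorem stmt_2 {V : Type*} [Fintype V] [DecidableEq V] (G : SimpleGraph V)
    [DecidableRel G.Adj] (ℓ : ℕ) (hℓ : 5 ≤ ℓ)
    (hG : G.Connected) (hTF : G.TangleFree ℓ)
    (G' : G.Subgraph) (hG'conn : G'.Connected)
    (hdiam : ∀ x y : G'.verts, (G'.coe.dist x y : ℝ) ≤ ((ℓ : ℝ) - 2) / 3) :
    (({e | G.IsCycleEdge e ∧ e ∉ G'.edgeSet ∧ ∃ v ∈ G'.verts, v ∈ e}).ncard : ℝ)
      ≤ 6 + 16 * G.edgeFinset.card / ℓ :=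
  stmt_2_general G ℓ hG hTF G' hG'conn hdiam
end

section
/- For any real number L > 1 and any positive integer p, we have the inequality ∑_{s=1}^{p} [s/(2p−s)] · C(2p−s, p) · L^s ≤ max(L,2)^{2p−1} / (max(L,2)−1)^{p−1}, where C(·,·) denotes the binomial coefficient. -/
open Finset

noncomputable def bb (n k : ℕ) : ℝ :=
  (k : ℝ) / ((2 * n - k : ℕ) : ℝ) * ((2 * n - k).choose n : ℝ)

lemma bb_nonneg (n k : ℕ) : 0 ≤ bb n k := by
  unfold bb; positivity

lemma bb_zero (n : ℕ) : bb n 0 = 0 := by simp [bb]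

lemma bb_top (n : ℕ) : bb (n+1) (n+2) = 0 := by
  have h : 2*(n+1) - (n+2) = n := by omega
  simp [bb, h, Nat.choose_succ_self]

lemma bb_rec (n k : ℕ) (hn : 1 ≤ n) (hk1 : 1 ≤ k) (hk2 : k ≤ n + 1) :
    bb (n+1) k = bb (n+1) (k+1) + bb n (k-1) := by
  set m := 2*n+1-k with hm
  have h1 : 2*(n+1) - k = m+1 := by omega
  have h2 : 2*(n+1) - (k+1) = m := by omega
  have h3 : 2*n - (k-1) = m := by omega
  have hm1 : 1 ≤ m := by omega
  have hmn : n ≤ m := by omega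
  have key : m.choose (n+1) * (n+1) = m.choose n * (m - n) :=
    Nat.choose_succ_right_eq m n
  have hmn' : m - n = n + 1 - k := by omega
  have pascal : (m+1).choose (n+1) = m.choose n + m.choose (n+1) :=
    Nat.choose_succ_succ m n
  have keyR : (m.choose (n+1) : ℝ) * ((n:ℝ)+1) = (m.choose n : ℝ) * ((n:ℝ)+1-(k:ℝ)) := by
    have h := congrArg (Nat.cast : ℕ → ℝ) key
    rw [Nat.cast_mul, Nat.cast_mul, hmn', Nat.cast_sub (by omega : k ≤ n+1)] at h
    push_cast at h
    linarith [h]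
  unfold bb
  rw [h1, h2, h3]
  have hk1' : ((k-1 : ℕ) : ℝ) = (k:ℝ) - 1 := by
    rw [Nat.cast_sub hk1]; norm_num
  have hmR : ((m:ℕ):ℝ) ≠ 0 := Nat.cast_ne_zero.mpr (by omega)
  have hmR1 : ((m:ℕ):ℝ) + 1 ≠ 0 := by positivity
  have hmval : ((m:ℕ):ℝ) = 2*(n:ℝ)+1-(k:ℝ) := by
    rw [hm, Nat.cast_sub (by omega : k ≤ 2*n+1)]; push_cast; ring
  rw [hk1', pascal]
  push_cast
  rw [hmval] at hmR hmR1 ⊢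
  field_simp
  linear_combination (-2 : ℝ) * keyR

noncomputable def Sf (M : ℝ) (p : ℕ) : ℝ := ∑ k ∈ Icc 1 p, bb p k * M ^ k

lemma Sf_eq (M : ℝ) (p : ℕ) : Sf M p = ∑ j ∈ range p, bb p (1+j) * M ^ (1+j) := by
  rw [Sf, ← Finset.Ico_add_one_right_eq_Icc, Finset.sum_Ico_eq_sum_range]
  simp

lemma Sf_nonneg (M : ℝ) (hM : 0 ≤ M) (p : ℕ) : 0 ≤ Sf M p := by
  apply Finset.sum_nonneg
  intro k _
  exact mul_nonneg (bb_nonneg _ _) (pow_nonneg hM _)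

lemma Sf_rec (M : ℝ) (hM : 2 ≤ M) (n : ℕ) (hn : 1 ≤ n) :
    Sf M (n+1) ≤ M^2 / (M-1) * Sf M n := by
  have hM0 : (0:ℝ) < M := by linarith
  have hM1 : (0:ℝ) < M - 1 := by linarith
  have step : Sf M (n+1) = (∑ j ∈ range (n+1), bb (n+1) (j+2) * M ^ (j+1))
      + (∑ j ∈ range (n+1), bb n j * M ^ (j+1)) := by
    rw [Sf_eq, ← Finset.sum_add_distrib]
    apply Finset.sum_congr rfl
    intro j hj
    rw [Finset.mem_range] at hj
    have := bb_rec n (1+j) hn (by omega) (by omega)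
    rw [this]
    have : 1 + j - 1 = j := by omega
    rw [this]
    ring_nf
  -- second sum equals M * Sf M n
  have hB : (∑ j ∈ range (n+1), bb n j * M ^ (j+1)) = M * Sf M n := by
    rw [Finset.sum_range_succ' (fun j => bb n j * M ^ (j+1))]
    rw [bb_zero]
    rw [Sf_eq, Finset.mul_sum]
    simp only [zero_mul, add_zero]
    apply Finset.sum_congr rfl
    intro j _
    have h1 : 1 + j = j + 1 := by omega
    rw [h1]
    ring
  -- first sum ≤ Sf M (n+1) / M
  have hA : (∑ j ∈ range (n+1), bb (n+1) (j+2) * M ^ (j+1)) ≤ Sf M (n+1) / M := by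
    rw [Finset.sum_range_succ, bb_top, zero_mul, add_zero]
    have hS : Sf M (n+1) = (∑ j ∈ range n, bb (n+1) (j+2) * M ^ (j+2)) + bb (n+1) 1 * M := by
      rw [Sf_eq, Finset.sum_range_succ' (fun j => bb (n+1) (1+j) * M ^ (1+j))]
      simp only [add_zero, pow_one]
      congr 1
      apply Finset.sum_congr rfl
      intro j _
      have h1 : 1 + (j + 1) = j + 2 := by omega
      rw [h1]
    have key : (∑ j ∈ range n, bb (n+1) (j+2) * M ^ (j+1))
        = ((∑ j ∈ range n, bb (n+1) (j+2) * M ^ (j+2))) / M := by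
      rw [Finset.sum_div]
      apply Finset.sum_congr rfl
      intro j _
      field_simp
      ring
    rw [key, hS]
    have hb1 : 0 ≤ bb (n+1) 1 * M := mul_nonneg (bb_nonneg _ _) (le_of_lt hM0)
    gcongr
    linarith
  have hineq : Sf M (n+1) ≤ Sf M (n+1) / M + M * Sf M n := by
    nth_rewrite 1 [step]
    linarith [hA, hB.le, hB.ge]
  rw [div_mul_eq_mul_div, le_div_iff₀ hM1]
  have hd : Sf M (n+1) / M * M = Sf M (n+1) := div_mul_cancel₀ _ (ne_of_gt hM0)
  nlinarith [hineq, hd, hM0, Sf_nonneg M (by linarith) n]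

lemma Sf_bound (M : ℝ) (hM : 2 ≤ M) (p : ℕ) (hp : 1 ≤ p) :
    Sf M p ≤ M ^ (2*p - 1) / (M - 1) ^ (p - 1) := by
  have hM0 : (0:ℝ) < M := by linarith
  have hM1 : (0:ℝ) < M - 1 := by linarith
  induction p, hp using Nat.le_induction with
  | base =>
      have : Sf M 1 = bb 1 1 * M := by
        rw [Sf]; simp
      rw [this]
      have : bb 1 1 = 1 := by
        unfold bb; norm_num
      rw [this]; norm_num
  | succ n hn ih =>
      have h1 := Sf_rec M hM n hn
      have h2 : M^2 / (M-1) * Sf M n ≤ M^2 / (M-1) * (M ^ (2*n - 1) / (M - 1) ^ (n - 1)) := by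
        apply mul_le_mul_of_nonneg_left ih
        positivity
      have h3 : M^2 / (M-1) * (M ^ (2*n - 1) / (M - 1) ^ (n - 1))
          = M ^ (2*(n+1) - 1) / (M - 1) ^ ((n+1) - 1) := by
        have e1 : 2*(n+1) - 1 = (2*n - 1) + 2 := by omega
        have e2 : (n+1) - 1 = (n - 1) + 1 := by omega
        rw [e1, e2, pow_add, pow_succ, div_mul_div_comm]
        ring
      linarith [h1, h2, h3.le, h3.ge]

/-- For any real `L > 1` and positive integer `p`,
`∑_{s=1}^{p} (s/(2p−s))·C(2p−s,p)·L^s ≤ max(L,2)^{2p−1} / (max(L,2)−1)^{p−1}`. -/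
theorem stmt_9 (L : ℝ) (hL : 1 < L) (p : ℕ) (hp : 0 < p) :
    (∑ s ∈ Finset.Icc 1 p,
        ((s : ℝ) / ((2 * p - s : ℕ) : ℝ)) * ((2 * p - s).choose p : ℝ) * L ^ s)
      ≤ (max L 2) ^ (2 * p - 1) / (max L 2 - 1) ^ (p - 1) := by
  have hM2 : 2 ≤ max L 2 := le_max_right _ _
  have hLM : L ≤ max L 2 := le_max_left _ _
  have hL0 : (0:ℝ) ≤ L := by linarith
  have step : (∑ s ∈ Finset.Icc 1 p,
        ((s : ℝ) / ((2 * p - s : ℕ) : ℝ)) * ((2 * p - s).choose p : ℝ) * L ^ s)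
      ≤ Sf (max L 2) p := by
    rw [Sf]
    apply Finset.sum_le_sum
    intro s _
    unfold bb
    apply mul_le_mul_of_nonneg_left (pow_le_pow_left₀ hL0 hLM s) (by positivity)
  exact step.trans (Sf_bound (max L 2) hM2 p hp)
end

section
/- Let Ξ be an n×n random symmetric matrix with zero diagonal whose entries above the diagonal are independent centered random variables uniformly bounded in absolute value by √h. Let r̃, δ > 0 be such that P(‖row_i(Ξ)‖₂² ≥ r̃) ≤ δ for every i ∈ [n]. Let S be a set of unordered pairs of indices in [n] which are pairwise disjoint (no two pairs share an index). Then P(for every {i,j} ∈ S, max(‖row_i(Ξ)‖₂², ‖row_j(Ξ)‖₂²) ≥ r̃ + 2|S|h) ≤ (2δ)^{|S|}. -/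
/-!
Write `C` for the set of indices covered by the pairs of `S`. For a pair `p = {i, j}` of `S`,
drop from the rows `i` and `j` the columns of `C \ {i, j}`: at most `2|S|` entries of size at
most `h` each, so the truncated rows still witness the event with threshold `r`. The truncated
rows of `p` only involve entries with an endpoint in `{i, j}` and none in `C \ {i, j}`; since the
pairs are disjoint these sets of entries are disjoint for different pairs, so the truncated events
are independent. Each of them has probability at most `2δ` by the union bound.
-/

open MeasureTheory ProbabilityTheory Finset

theorem ProbabilityTheory.iIndep.measure_biInter_eq_prod_of_pairwiseDisjoint
    {Ω ι κ : Type*} {mΩ : MeasurableSpace Ω} {μ : Measure Ω} [IsProbabilityMeasure μ]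
    {m : ι → MeasurableSpace Ω}
    (h_le : ∀ i, m i ≤ mΩ) (h_indep : iIndep m μ) {S : Finset κ} {G : κ → Set ι}
    (hG : (S : Set κ).PairwiseDisjoint G) {E : κ → Set Ω}
    (hE : ∀ a ∈ S, MeasurableSet[⨆ i ∈ G a, m i] (E a)) :
    μ (⋂ a ∈ S, E a) = ∏ a ∈ S, μ (E a) := by
  classical
  induction S using Finset.induction_on with
  | empty => simp
  | @insert a s ha ih =>
    have hG' : (s : Set κ).PairwiseDisjoint G := hG.subset (by simp)
    have hdisj : Disjoint (G a) (⋃ b ∈ s, G b) :=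
      Set.disjoint_iUnion₂_right.2 fun b hb =>
        hG (by simp) (by simp [hb]) (by rintro rfl; exact ha hb)
    have hs_meas : MeasurableSet[⨆ i ∈ ⋃ b ∈ s, G b, m i] (⋂ b ∈ s, E b) :=
      @Finset.measurableSet_biInter _ _ (⨆ i ∈ ⋃ b ∈ s, G b, m i) _ s fun b hb =>
        have hle : ⨆ i ∈ G b, m i ≤ ⨆ i ∈ ⋃ b ∈ s, G b, m i :=
          biSup_mono fun i hi => Set.mem_biUnion hb hi
        hle _ (hE b (mem_insert_of_mem hb))
    rw [Finset.set_biInter_insert, prod_insert ha,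
      (Indep_iff _ _ μ).1 (indep_iSup_of_disjoint h_le h_indep hdisj) _ _
        (hE a (mem_insert_self a s)) hs_meas,
      ih hG' fun b hb => hE b (mem_insert_of_mem hb)]

theorem ENNReal.ofReal_pow_le_ofReal_pow (x : ℝ) (k : ℕ) :
    ENNReal.ofReal x ^ k ≤ ENNReal.ofReal (x ^ k) := by
  rcases le_or_gt 0 x with hx | hx
  · rw [ENNReal.ofReal_pow hx]
  · rcases k with _ | k
    · simp
    · simp [ENNReal.ofReal_eq_zero.2 hx.le]

namespace SymmetricRandomMatrix

variable {ι Ω : Type*} [LinearOrder ι]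

def coveredIndices (S : Finset (ι × ι)) : Finset ι :=
  S.biUnion fun p => {p.1, p.2}

theorem card_coveredIndices_le (S : Finset (ι × ι)) : #(coveredIndices S) ≤ 2 * #S :=
  calc #(coveredIndices S) ≤ ∑ p ∈ S, #({p.1, p.2} : Finset ι) := card_biUnion_le
    _ ≤ ∑ _p ∈ S, 2 := sum_le_sum fun p _ => card_le_two
    _ = 2 * #S := by rw [sum_const, smul_eq_mul, mul_comm]

def otherIndices (S : Finset (ι × ι)) (p : ι × ι) : Finset ι :=
  coveredIndices S \ {p.1, p.2}

theorem card_otherIndices_le (S : Finset (ι × ι)) (p : ι × ι) : #(otherIndices S p) ≤ 2 * #S :=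
  (card_le_card sdiff_subset).trans (card_coveredIndices_le S)

theorem subset_otherIndices {S : Finset (ι × ι)} {p q : ι × ι} (hp : p ∈ S)
    (hpq : Disjoint ({p.1, p.2} : Finset ι) {q.1, q.2}) :
    ({p.1, p.2} : Finset ι) ⊆ otherIndices S q := fun _ hx =>
  mem_sdiff.2 ⟨mem_biUnion.2 ⟨p, hp, hx⟩, disjoint_left.1 hpq hx⟩

def touchingEntries (S : Finset (ι × ι)) (p : ι × ι) : Set {e : ι × ι // e.1 < e.2} :=
  {e | (e.1.1 ∈ ({p.1, p.2} : Finset ι) ∨ e.1.2 ∈ ({p.1, p.2} : Finset ι)) ∧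
    e.1.1 ∉ otherIndices S p ∧ e.1.2 ∉ otherIndices S p}

theorem pairwiseDisjoint_touchingEntries {S : Finset (ι × ι)}
    (hS : ∀ p ∈ S, ∀ q ∈ S, p ≠ q → Disjoint ({p.1, p.2} : Finset ι) {q.1, q.2}) :
    (S : Set (ι × ι)).PairwiseDisjoint (touchingEntries S) := by
  intro p hp q hq hpq
  refine Set.disjoint_left.2 fun e ⟨he, _⟩ ⟨_, he₁, he₂⟩ => ?_
  have hsub := subset_otherIndices hp (hS p hp q hq hpq)
  rcases he with he | he
  · exact he₁ (hsub he)
  · exact he₂ (hsub he)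

abbrev touchingSigma (Ξ : Ω → Matrix ι ι ℝ) (S : Finset (ι × ι)) (p : ι × ι) :
    MeasurableSpace Ω :=
  ⨆ e ∈ touchingEntries S p, MeasurableSpace.comap (fun ω => Ξ ω e.1.1 e.1.2) inferInstance

theorem measurable_entry_touchingSigma {Ξ : Ω → Matrix ι ι ℝ} {S : Finset (ι × ι)}
    {p : ι × ι} (hsym : ∀ ω i j, Ξ ω i j = Ξ ω j i)
    (hdiag : ∀ ω i, Ξ ω i i = 0) {i k : ι} (hi : i ∈ ({p.1, p.2} : Finset ι))
    (hk : k ∉ otherIndices S p) :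
    Measurable[touchingSigma Ξ S p] fun ω => Ξ ω i k := by
  have hi' : i ∉ otherIndices S p := fun h => (mem_sdiff.1 h).2 hi
  have measurable_of_mem {e : {e : ι × ι // e.1 < e.2}} (he : e ∈ touchingEntries S p) :
      Measurable[touchingSigma Ξ S p] fun ω => Ξ ω e.1.1 e.1.2 :=
    (comap_measurable _).mono
      (le_iSup₂ (f := fun e (_ : e ∈ touchingEntries S p) =>
        MeasurableSpace.comap (fun ω => Ξ ω e.1.1 e.1.2) inferInstance) e he) le_rfl
  rcases lt_trichotomy i k with hik | rfl | hki
  · exact measurable_of_mem (e := ⟨(i, k), hik⟩) ⟨Or.inl hi, hi', hk⟩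
  · simpa only [hdiag] using measurable_const
  · have hrev := measurable_of_mem (e := ⟨(k, i), hki⟩) ⟨Or.inr hi, hk, hi'⟩
    exact (funext fun ω => hsym ω k i) ▸ hrev

variable [Fintype ι]

def truncatedRowSq (Ξ : Ω → Matrix ι ι ℝ) (S : Finset (ι × ι)) (p : ι × ι) (i : ι)
    (ω : Ω) : ℝ :=
  ∑ k ∈ (otherIndices S p)ᶜ, Ξ ω i k ^ 2

def truncatedEvent (Ξ : Ω → Matrix ι ι ℝ) (r : ℝ) (S : Finset (ι × ι)) (p : ι × ι) : Set Ω :=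
  {ω | r ≤ max (truncatedRowSq Ξ S p p.1 ω) (truncatedRowSq Ξ S p p.2 ω)}

theorem measurableSet_truncatedEvent {Ξ : Ω → Matrix ι ι ℝ} {S : Finset (ι × ι)}
    {p : ι × ι} (hsym : ∀ ω i j, Ξ ω i j = Ξ ω j i)
    (hdiag : ∀ ω i, Ξ ω i i = 0) (r : ℝ) :
    MeasurableSet[touchingSigma Ξ S p] (truncatedEvent Ξ r S p) := by
  have hrow {i : ι} (hi : i ∈ ({p.1, p.2} : Finset ι)) :
      Measurable[touchingSigma Ξ S p] (truncatedRowSq Ξ S p i) :=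
    Finset.measurable_sum _ fun k hk =>
      (measurable_entry_touchingSigma hsym hdiag hi (mem_compl.1 hk)).pow_const 2
  exact measurableSet_le measurable_const ((hrow (by simp)).max (hrow (by simp)))

theorem truncatedRowSq_le (Ξ : Ω → Matrix ι ι ℝ) (S : Finset (ι × ι)) (p : ι × ι) (i : ι)
    (ω : Ω) : truncatedRowSq Ξ S p i ω ≤ ∑ k, Ξ ω i k ^ 2 :=
  sum_le_sum_of_subset_of_nonneg (subset_univ _) fun _ _ _ => sq_nonneg _

theorem sum_sq_le_truncatedRowSq_add {Ξ : Ω → Matrix ι ι ℝ} {h : ℝ} (hh : 0 ≤ h)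
    (hsq : ∀ ω i j, Ξ ω i j ^ 2 ≤ h) (S : Finset (ι × ι)) (p : ι × ι) (i : ι) (ω : Ω) :
    ∑ k, Ξ ω i k ^ 2 ≤ truncatedRowSq Ξ S p i ω + 2 * #S * h := by
  have hother : ∑ k ∈ otherIndices S p, Ξ ω i k ^ 2 ≤ 2 * #S * h :=
    calc ∑ k ∈ otherIndices S p, Ξ ω i k ^ 2 ≤ #(otherIndices S p) * h := by
          simpa using sum_le_sum fun k (_ : k ∈ otherIndices S p) => hsq ω i k
      _ ≤ 2 * #S * h := by
          gcongr; exact_mod_cast card_otherIndices_le S p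
  rw [← sum_add_sum_compl (otherIndices S p), truncatedRowSq]
  linarith

theorem setOf_le_max_subset_truncatedEvent {Ξ : Ω → Matrix ι ι ℝ} {h : ℝ} (hh : 0 ≤ h)
    (hsq : ∀ ω i j, Ξ ω i j ^ 2 ≤ h) (r : ℝ) (S : Finset (ι × ι)) (p : ι × ι) :
    {ω | r + 2 * #S * h ≤ max (∑ j, Ξ ω p.1 j ^ 2) (∑ j, Ξ ω p.2 j ^ 2)} ⊆
      truncatedEvent Ξ r S p := fun ω hω => by
  have := max_le_max (sum_sq_le_truncatedRowSq_add hh hsq S p p.1 ω)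
    (sum_sq_le_truncatedRowSq_add hh hsq S p p.2 ω)
  rw [max_add_add_right] at this
  exact le_of_add_le_add_right (hω.trans this)

theorem measure_truncatedEvent_le {_ : MeasurableSpace Ω} (μ : Measure Ω)
    (Ξ : Ω → Matrix ι ι ℝ) (r : ℝ) (S : Finset (ι × ι)) (p : ι × ι) :
    μ (truncatedEvent Ξ r S p) ≤
      μ {ω | r ≤ ∑ j, Ξ ω p.1 j ^ 2} + μ {ω | r ≤ ∑ j, Ξ ω p.2 j ^ 2} := by
  refine (measure_mono fun ω hω => ?_).trans (measure_union_le _ _)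
  rcases le_max_iff.1 (show r ≤ max _ _ from hω) with h₁ | h₂
  · exact Or.inl (h₁.trans (truncatedRowSq_le Ξ S p p.1 ω))
  · exact Or.inr (h₂.trans (truncatedRowSq_le Ξ S p p.2 ω))

end SymmetricRandomMatrix

open SymmetricRandomMatrix

theorem stmt_12_general {Ω : Type*} [MeasureSpace Ω] [IsProbabilityMeasure (ℙ : Measure Ω)]
    (n : ℕ) (h : ℝ) (hh : 0 ≤ h)
    (Ξ : Ω → Matrix (Fin n) (Fin n) ℝ)
    (hmeas : ∀ i j, Measurable fun ω => Ξ ω i j)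
    (hsym : ∀ ω i j, Ξ ω i j = Ξ ω j i)
    (hdiag : ∀ ω i, Ξ ω i i = 0)
    (hbdd : ∀ ω i j, |Ξ ω i j| ≤ Real.sqrt h)
    (hindep : iIndepFun
      (fun (e : {pr : Fin n × Fin n // pr.1 < pr.2}) => fun ω => Ξ ω e.1.1 e.1.2) ℙ)
    (r δ : ℝ)
    (hrow : ∀ i, ℙ {ω | r ≤ ∑ j, (Ξ ω i j) ^ 2} ≤ ENNReal.ofReal δ)
    (S : Finset (Fin n × Fin n))
    (hdisj : ∀ pr ∈ S, ∀ pr' ∈ S, pr ≠ pr' →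
      pr.1 ≠ pr'.1 ∧ pr.1 ≠ pr'.2 ∧ pr.2 ≠ pr'.1 ∧ pr.2 ≠ pr'.2) :
    ℙ {ω | ∀ pr ∈ S,
        r + 2 * S.card * h ≤ max (∑ j, (Ξ ω pr.1 j) ^ 2) (∑ j, (Ξ ω pr.2 j) ^ 2)}
      ≤ ENNReal.ofReal ((2 * δ) ^ S.card) := by
  have hsq : ∀ ω i j, Ξ ω i j ^ 2 ≤ h := fun ω i j => by
    rw [← sq_abs]; exact (Real.le_sqrt (abs_nonneg _) hh).1 (hbdd ω i j)
  have hS : ∀ p ∈ S, ∀ q ∈ S, p ≠ q → Disjoint ({p.1, p.2} : Finset (Fin n)) {q.1, q.2} :=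
    fun p hp q hq hpq => by
      obtain ⟨h₁, h₂, h₃, h₄⟩ := hdisj p hp q hq hpq
      simp [h₁.symm, h₂.symm, h₃.symm, h₄.symm]
  have hevent (p : Fin n × Fin n) : ℙ (truncatedEvent Ξ r S p) ≤ ENNReal.ofReal (2 * δ) := by
    rw [ENNReal.ofReal_mul zero_le_two, ENNReal.ofReal_ofNat, two_mul]
    exact (measure_truncatedEvent_le ℙ Ξ r S p).trans (add_le_add (hrow p.1) (hrow p.2))
  calc _ ≤ ℙ (⋂ p ∈ S, truncatedEvent Ξ r S p) := measure_mono fun ω (hω : ∀ p ∈ S, _) =>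
        Set.mem_iInter₂.2 fun p hp => setOf_le_max_subset_truncatedEvent hh hsq r S p (hω p hp)
    _ = ∏ p ∈ S, ℙ (truncatedEvent Ξ r S p) :=
        ((iIndepFun_iff_iIndep _ _ _).1 hindep).measure_biInter_eq_prod_of_pairwiseDisjoint
          (fun e => (hmeas _ _).comap_le) (pairwiseDisjoint_touchingEntries hS)
          fun p _ => measurableSet_truncatedEvent hsym hdiag r
    _ ≤ ENNReal.ofReal (2 * δ) ^ S.card := by
        simpa using prod_le_prod' fun p (_ : p ∈ S) => hevent p
    _ ≤ _ := ENNReal.ofReal_pow_le_ofReal_pow _ _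

/-- Let `Ξ` be an `n×n` random symmetric matrix with zero diagonal and
independent centered above-diagonal entries bounded by `√h`. If each row satisfies
`P(‖row_i‖₂² ≥ r̃) ≤ δ`, then for any set `S` of pairwise disjoint unordered pairs of indices,
`P(∀ {i,j} ∈ S, max(‖row_i‖₂², ‖row_j‖₂²) ≥ r̃ + 2|S|h) ≤ (2δ)^{|S|}`. -/
theorem stmt_12 {Ω : Type*} [MeasureSpace Ω] [IsProbabilityMeasure (ℙ : Measure Ω)]
    (n : ℕ) (h : ℝ) (hh : 0 ≤ h)
    (Ξ : Ω → Matrix (Fin n) (Fin n) ℝ)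
    (hmeas : ∀ i j, Measurable fun ω => Ξ ω i j)
    (hsym : ∀ ω i j, Ξ ω i j = Ξ ω j i)
    (hdiag : ∀ ω i, Ξ ω i i = 0)
    (hbdd : ∀ ω i j, |Ξ ω i j| ≤ Real.sqrt h)
    (hcent : ∀ i j : Fin n, i ≠ j → ∫ ω, Ξ ω i j = 0)
    (hindep : iIndepFun
      (fun (e : {pr : Fin n × Fin n // pr.1 < pr.2}) => fun ω => Ξ ω e.1.1 e.1.2) ℙ)
    (r δ : ℝ)
    (hrow : ∀ i, ℙ {ω | r ≤ ∑ j, (Ξ ω i j) ^ 2} ≤ ENNReal.ofReal δ)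
    (S : Finset (Fin n × Fin n))
    (hSlt : ∀ pr ∈ S, pr.1 < pr.2)
    (hdisj : ∀ pr ∈ S, ∀ pr' ∈ S, pr ≠ pr' →
      pr.1 ≠ pr'.1 ∧ pr.1 ≠ pr'.2 ∧ pr.2 ≠ pr'.1 ∧ pr.2 ≠ pr'.2) :
    ℙ {ω | ∀ pr ∈ S,
        r + 2 * S.card * h ≤ max (∑ j, (Ξ ω pr.1 j) ^ 2) (∑ j, (Ξ ω pr.2 j) ^ 2)}
      ≤ ENNReal.ofReal ((2 * δ) ^ S.card) :=
  stmt_12_general n h hh Ξ hmeas hsym hdiag hbdd hindep r δ hrow S hdisj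
end

section
/- Let Ξ = (ξ_{ij}) be an n×n random symmetric matrix with zero diagonal whose above-diagonal entries are independent centered random variables uniformly bounded by √h. Let r > 0 and let E be the event that ‖row_i(Ξ)‖₂² ≤ r for all i ∈ [n], assumed to have positive probability. Let S be a set of pairwise disjoint unordered pairs of indices, and let E_S be the event that for every {i,j} ∈ S, max(‖row_i(Ξ)‖₂², ‖row_j(Ξ)‖₂²) ≥ r + ξ_{ij}² − h. Then for any multiset E' of unordered pairs containing S such that every element of S has multiplicity one in E', we have E[∏_{{i,j}∈E'} ξ_{ij} · 1_E] = E[∏_{{i,j}∈E'} ξ_{ij} · 1_{E_S ∩ E}]. -/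
/-!
Add the pairs of `S` to the event one at a time: it suffices that the integral over
`(E_T ∩ E) \ E_a` vanishes for `a = {i, j} ∈ S \ T`. Off `E_a` the rows `i` and `j` have squared
norm `< r + ξ_a² - h ≤ r`, so membership in this event does not change when `ξ_a` is set to zero;
as `T` avoids `i` and `j`, the event is then a function of the other entries. Since `ξ_a` occurs
exactly once in the product, the integrand is `ξ_a` times a function of the other entries, and
independence and centering make the integral vanish.
-/

open MeasureTheory ProbabilityTheory

theorem Multiset.abs_prod_map_le_pow_card {α : Type*} {m : Multiset α} {f : α → ℝ} {C : ℝ}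
    (hf : ∀ a ∈ m, |f a| ≤ C) : |(m.map f).prod| ≤ C ^ card m := by
  induction m using Multiset.induction_on with
  | empty => simp
  | cons a m ih =>
    rw [Multiset.map_cons, Multiset.prod_cons, abs_mul, Multiset.card_cons, pow_succ']
    exact mul_le_mul (hf a (mem_cons_self a m)) (ih fun b hb => hf b (mem_cons_of_mem hb))
      (abs_nonneg _) ((abs_nonneg _).trans (hf a (mem_cons_self a m)))

theorem integral_mul_eq_mul_integral_of_update_invariant {Ω ι : Type*} [MeasurableSpace Ω]
    {μ : Measure Ω} [Fintype ι] [DecidableEq ι] {X : ι → Ω → ℝ} (hX : iIndepFun X μ)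
    (hXm : ∀ i, Measurable (X i)) (a : ι) {G : (ι → ℝ) → ℝ} (hG : Measurable G)
    (hGa : ∀ x t, G (Function.update x a t) = G x) :
    ∫ ω, X a ω * G (fun i => X i ω) ∂μ = (∫ ω, X a ω ∂μ) * ∫ ω, G (fun i => X i ω) ∂μ := by
  set G' : (({a}ᶜ : Finset ι) → ℝ) → ℝ :=
    fun y => G fun i => if hi : i ∈ ({a}ᶜ : Finset ι) then y ⟨i, hi⟩ else 0
  have hG' : Measurable G' := hG.comp <| measurable_pi_lambda _ fun i => by
    by_cases hi : i ∈ ({a}ᶜ : Finset ι)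
    · simpa only [hi, dite_true] using measurable_pi_apply _
    · simpa only [hi, dite_false] using measurable_const
  have hGG' : ∀ ω, G (fun i => X i ω) = G' fun i => X i ω := fun ω => by
    rw [← hGa _ 0]
    congr 1
    ext i
    by_cases hi : i = a <;> simp [hi, Function.update_of_ne]
  have hind : IndepFun (X a) (fun ω => G (fun i => X i ω)) μ := by
    simp_rw [hGG']
    exact (hX.indepFun_finset {a} {a}ᶜ disjoint_compl_right hXm).comp
      (measurable_pi_apply ⟨a, Finset.mem_singleton_self a⟩) hG'
  exact hind.integral_mul_eq_mul_integral (hXm a).aestronglyMeasurable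
    (hG.comp (measurable_pi_lambda _ fun i => hXm i)).aestronglyMeasurable

section MatrixEvents

variable {ι : Type*}

def pairProd (E' : Multiset (ι × ι)) (M : ι → ι → ℝ) : ℝ := (E'.map fun p => M p.1 p.2).prod

theorem measurable_pairProd (E' : Multiset (ι × ι)) :
    Measurable fun M : ι → ι → ℝ => pairProd E' M := by
  simpa [pairProd, Multiset.map_map, Function.comp_def] using
    (E'.map fun p (M : ι → ι → ℝ) => M p.1 p.2).measurable_fun_prod <| by
      simp only [Multiset.mem_map]
      rintro _ ⟨p, -, rfl⟩
      fun_prop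

variable [Fintype ι]

def rowSq (M : ι → ι → ℝ) (k : ι) : ℝ := ∑ l, M k l ^ 2

def boundedRows (r : ℝ) : Set (ι → ι → ℝ) := {M | ∀ k, rowSq M k ≤ r}

def pairEvent (r h : ℝ) (p : ι × ι) : Set (ι → ι → ℝ) :=
  {M | r + M p.1 p.2 ^ 2 - h ≤ max (rowSq M p.1) (rowSq M p.2)}

def pairsEvent (r h : ℝ) (T : Finset (ι × ι)) : Set (ι → ι → ℝ) :=
  {M | ∀ p ∈ T, M ∈ pairEvent r h p}

theorem measurable_rowSq (k : ι) : Measurable fun M : ι → ι → ℝ => rowSq M k := by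
  unfold rowSq; fun_prop

theorem measurableSet_boundedRows (r : ℝ) : MeasurableSet (boundedRows r : Set (ι → ι → ℝ)) := by
  simp only [boundedRows, Set.ofPred_forall]
  exact .iInter fun k => measurableSet_le (measurable_rowSq k) measurable_const

theorem measurableSet_pairEvent (r h : ℝ) (p : ι × ι) :
    MeasurableSet (pairEvent r h p : Set (ι → ι → ℝ)) :=
  measurableSet_le (by fun_prop) ((measurable_rowSq p.1).max (measurable_rowSq p.2))

theorem measurableSet_pairsEvent (r h : ℝ) (T : Finset (ι × ι)) :
    MeasurableSet (pairsEvent r h T : Set (ι → ι → ℝ)) := by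
  have : pairsEvent r h T = ⋂ p ∈ T, pairEvent r h p := by ext; simp [pairsEvent]
  rw [this]
  exact Finset.measurableSet_biInter T fun p _ => measurableSet_pairEvent r h p

theorem pairsEvent_empty (r h : ℝ) : (pairsEvent r h ∅ : Set (ι → ι → ℝ)) = Set.univ := by
  ext; simp [pairsEvent]

theorem pairsEvent_insert (r h : ℝ) (p : ι × ι) (T : Finset (ι × ι)) [DecidableEq ι] :
    (pairsEvent r h (insert p T) : Set (ι → ι → ℝ)) = pairsEvent r h T ∩ pairEvent r h p := by
  ext; simp [pairsEvent, and_comm]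

end MatrixEvents

section SymmetricMatrix

variable {ι : Type*} [LinearOrder ι]

abbrev UpperPair (ι : Type*) [LinearOrder ι] := {p : ι × ι // p.1 < p.2}

def symmOfUpper (x : UpperPair ι → ℝ) (k l : ι) : ℝ :=
  if hkl : k < l then x ⟨(k, l), hkl⟩ else if hlk : l < k then x ⟨(l, k), hlk⟩ else 0

theorem symmOfUpper_upperCoords {M : ι → ι → ℝ} (hsym : ∀ k l, M k l = M l k)
    (hdiag : ∀ k, M k k = 0) : symmOfUpper (fun e : UpperPair ι => M e.1.1 e.1.2) = M := by
  ext k l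
  rcases lt_trichotomy k l with hkl | rfl | hlk
  · simp [symmOfUpper, hkl]
  · simp [symmOfUpper, hdiag]
  · simp [symmOfUpper, hlk, not_lt_of_gt hlk, hsym k l]

theorem measurable_symmOfUpper : Measurable (symmOfUpper : (UpperPair ι → ℝ) → ι → ι → ℝ) := by
  refine measurable_pi_lambda _ fun k => measurable_pi_lambda _ fun l => ?_
  unfold symmOfUpper
  split_ifs
  exacts [measurable_pi_apply _, measurable_pi_apply _, measurable_const]

theorem symmOfUpper_fst_snd (x : UpperPair ι → ℝ) (a : UpperPair ι) :
    symmOfUpper x a.1.1 a.1.2 = x a := by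
  simp [symmOfUpper, a.2]

theorem symmOfUpper_snd_fst (x : UpperPair ι → ℝ) (a : UpperPair ι) :
    symmOfUpper x a.1.2 a.1.1 = x a := by
  simp [symmOfUpper, a.2, not_lt_of_gt a.2]

theorem symmOfUpper_update_of_ne (x : UpperPair ι → ℝ) (a : UpperPair ι) (t : ℝ) {k l : ι}
    (hkl : (k, l) ≠ a.1) (hlk : (l, k) ≠ a.1) :
    symmOfUpper (Function.update x a t) k l = symmOfUpper x k l := by
  unfold symmOfUpper
  split_ifs <;> first | rfl | (rw [Function.update_of_ne]; simp [Subtype.ext_iff, *])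

theorem pairProd_symmOfUpper (x : UpperPair ι → ℝ) (a : UpperPair ι) {E' : Multiset (ι × ι)}
    (hE' : ∀ p ∈ E', p.1 < p.2) (hcount : E'.count a.1 = 1) :
    pairProd E' (symmOfUpper x)
      = x a * pairProd (E'.erase a.1) (symmOfUpper (Function.update x a 0)) := by
  have ha : a.1 ∈ E' := Multiset.count_pos.1 (by omega)
  have ha' : a.1 ∉ E'.erase a.1 := by
    rw [← Multiset.count_eq_zero, Multiset.count_erase_self, hcount]
  conv_lhs => rw [pairProd, ← Multiset.cons_erase ha, Multiset.map_cons, Multiset.prod_cons]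
  rw [symmOfUpper_fst_snd, pairProd]
  congr 2
  refine Multiset.map_congr rfl fun p hp => (symmOfUpper_update_of_ne x a 0 ?_ ?_).symm
  · exact fun h => ha' (h ▸ hp)
  · intro h
    have hlt := a.2
    rw [← h] at hlt
    exact (hE' p (Multiset.mem_of_mem_erase hp)).not_gt hlt

variable [Fintype ι]

theorem rowSq_symmOfUpper_update_of_ne (x : UpperPair ι → ℝ) (a : UpperPair ι) (t : ℝ) {k : ι}
    (h₁ : k ≠ a.1.1) (h₂ : k ≠ a.1.2) :
    rowSq (symmOfUpper (Function.update x a t)) k = rowSq (symmOfUpper x) k :=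
  Finset.sum_congr rfl fun l _ => by
    rw [symmOfUpper_update_of_ne _ _ _ (fun h => h₁ (congrArg Prod.fst h))
      (fun h => h₂ (congrArg Prod.snd h))]

theorem rowSq_symmOfUpper_fst (x : UpperPair ι → ℝ) (a : UpperPair ι) :
    rowSq (symmOfUpper x) a.1.1 = rowSq (symmOfUpper (Function.update x a 0)) a.1.1 + x a ^ 2 := by
  unfold rowSq
  rw [← Finset.add_sum_erase _ _ (Finset.mem_univ a.1.2),
    ← Finset.add_sum_erase _ _ (Finset.mem_univ a.1.2), symmOfUpper_fst_snd,
    symmOfUpper_fst_snd, Function.update_self, Finset.sum_congr rfl fun l hl =>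
      congrArg (· ^ 2) (symmOfUpper_update_of_ne x a 0 ?_ ?_)]
  · ring
  · exact fun h => Finset.ne_of_mem_erase hl (congrArg Prod.snd h)
  · exact fun h => a.2.ne (congrArg Prod.snd h)

theorem rowSq_symmOfUpper_snd (x : UpperPair ι → ℝ) (a : UpperPair ι) :
    rowSq (symmOfUpper x) a.1.2 = rowSq (symmOfUpper (Function.update x a 0)) a.1.2 + x a ^ 2 := by
  unfold rowSq
  rw [← Finset.add_sum_erase _ _ (Finset.mem_univ a.1.1),
    ← Finset.add_sum_erase _ _ (Finset.mem_univ a.1.1), symmOfUpper_snd_fst,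
    symmOfUpper_snd_fst, Function.update_self, Finset.sum_congr rfl fun l hl =>
      congrArg (· ^ 2) (symmOfUpper_update_of_ne x a 0 ?_ ?_)]
  · ring
  · exact fun h => a.2.ne' (congrArg Prod.fst h)
  · exact fun h => Finset.ne_of_mem_erase hl (congrArg Prod.fst h)

theorem symmOfUpper_update_mem_diff_pairEvent_iff {r h : ℝ} (x : UpperPair ι → ℝ)
    (a : UpperPair ι) (hxa : x a ^ 2 ≤ h) {T : Finset (ι × ι)}
    (hT : ∀ p ∈ T, p.1 ≠ a.1.1 ∧ p.1 ≠ a.1.2 ∧ p.2 ≠ a.1.1 ∧ p.2 ≠ a.1.2) :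
    symmOfUpper (Function.update x a 0) ∈ (pairsEvent r h T ∩ boundedRows r) \ pairEvent r h a.1
      ↔ symmOfUpper x ∈ (pairsEvent r h T ∩ boundedRows r) \ pairEvent r h a.1 := by
  set M := symmOfUpper x
  set M' := symmOfUpper (Function.update x a 0)
  have hrow₁ := rowSq_symmOfUpper_fst x a
  have hrow₂ := rowSq_symmOfUpper_snd x a
  have hpairs : M' ∈ pairsEvent r h T ↔ M ∈ pairsEvent r h T := by
    refine forall₂_congr fun p hp => ?_
    obtain ⟨h₁₁, h₁₂, h₂₁, h₂₂⟩ := hT p hp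
    simp only [pairEvent, Set.mem_ofPred_eq, M, M', rowSq_symmOfUpper_update_of_ne x a 0 h₁₁ h₁₂,
      rowSq_symmOfUpper_update_of_ne x a 0 h₂₁ h₂₂,
      symmOfUpper_update_of_ne x a 0 (fun h => h₁₁ (congrArg Prod.fst h))
        (fun h => h₂₁ (congrArg Prod.fst h))]
  have hlight : M' ∉ pairEvent r h a.1 ↔ M ∉ pairEvent r h a.1 := by
    simp only [pairEvent, Set.mem_ofPred_eq, not_le, M', M, hrow₁, hrow₂, max_add_add_right,
      symmOfUpper_fst_snd, Function.update_self]
    constructor <;> intro <;> linarith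
  have hrows : M' ∉ pairEvent r h a.1 → (M' ∈ boundedRows r ↔ M ∈ boundedRows r) := by
    intro hM'
    simp only [pairEvent, Set.mem_ofPred_eq, not_le, M', symmOfUpper_fst_snd, Function.update_self,
      max_lt_iff] at hM'
    refine forall_congr' fun k => ?_
    by_cases h₁ : k = a.1.1
    · subst h₁; rw [hrow₁]; constructor <;> intro <;> linarith [sq_nonneg (x a)]
    by_cases h₂ : k = a.1.2
    · subst h₂; rw [hrow₂]; constructor <;> intro <;> linarith [sq_nonneg (x a)]
    rw [rowSq_symmOfUpper_update_of_ne x a 0 h₁ h₂]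
  simp only [Set.mem_sdiff, Set.mem_inter_iff, hpairs, hlight]
  exact and_congr_left fun hM => and_congr_right fun _ => hrows (hlight.2 hM)

theorem indicator_diff_pairEvent_symmOfUpper {r h : ℝ} (x : UpperPair ι → ℝ) (a : UpperPair ι)
    (hxa : x a ^ 2 ≤ h) {T : Finset (ι × ι)}
    (hT : ∀ p ∈ T, p.1 ≠ a.1.1 ∧ p.1 ≠ a.1.2 ∧ p.2 ≠ a.1.1 ∧ p.2 ≠ a.1.2)
    {E' : Multiset (ι × ι)} (hE' : ∀ p ∈ E', p.1 < p.2) (hcount : E'.count a.1 = 1) :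
    ((pairsEvent r h T ∩ boundedRows r) \ pairEvent r h a.1).indicator (pairProd E')
        (symmOfUpper x)
      = x a * ((pairsEvent r h T ∩ boundedRows r) \ pairEvent r h a.1).indicator
          (pairProd (E'.erase a.1)) (symmOfUpper (Function.update x a 0)) := by
  have hiff := symmOfUpper_update_mem_diff_pairEvent_iff (r := r) x a hxa hT
  by_cases hM : symmOfUpper x ∈ (pairsEvent r h T ∩ boundedRows r) \ pairEvent r h a.1
  · rw [Set.indicator_of_mem hM, Set.indicator_of_mem (hiff.2 hM),
      pairProd_symmOfUpper x a hE' hcount]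
  · rw [Set.indicator_of_notMem hM, Set.indicator_of_notMem (mt hiff.1 hM), mul_zero]

end SymmetricMatrix

section RandomMatrix

variable {Ω ι : Type*} [MeasurableSpace Ω] {μ : Measure Ω} [LinearOrder ι] [Fintype ι]
  {Ξ : Ω → ι → ι → ℝ} {r h : ℝ}

theorem setIntegral_diff_pairEvent_eq_zero (hmeas : ∀ i j, Measurable fun ω => Ξ ω i j)
    (hsym : ∀ ω i j, Ξ ω i j = Ξ ω j i) (hdiag : ∀ ω i, Ξ ω i i = 0)
    (hsq : ∀ ω i j, Ξ ω i j ^ 2 ≤ h)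
    (hindep : iIndepFun (fun (e : UpperPair ι) ω => Ξ ω e.1.1 e.1.2) μ)
    (a : UpperPair ι) (hcent : ∫ ω, Ξ ω a.1.1 a.1.2 ∂μ = 0) {T : Finset (ι × ι)}
    (hT : ∀ p ∈ T, p.1 ≠ a.1.1 ∧ p.1 ≠ a.1.2 ∧ p.2 ≠ a.1.1 ∧ p.2 ≠ a.1.2)
    {E' : Multiset (ι × ι)} (hE' : ∀ p ∈ E', p.1 < p.2) (hcount : E'.count a.1 = 1) :
    ∫ ω in Ξ ⁻¹' ((pairsEvent r h T ∩ boundedRows r) \ pairEvent r h a.1),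
      pairProd E' (Ξ ω) ∂μ = 0 := by
  set D := (pairsEvent r h T ∩ boundedRows r) \ pairEvent r h a.1
  set X : UpperPair ι → Ω → ℝ := fun e ω => Ξ ω e.1.1 e.1.2
  set G : (UpperPair ι → ℝ) → ℝ :=
    fun x => D.indicator (pairProd (E'.erase a.1)) (symmOfUpper (Function.update x a 0))
  have hD : MeasurableSet D := ((measurableSet_pairsEvent r h T).inter
    (measurableSet_boundedRows r)).diff (measurableSet_pairEvent r h a.1)
  have hΞ : Measurable Ξ := measurable_pi_lambda _ fun i => measurable_pi_lambda _ (hmeas i)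
  have hG : Measurable G := ((measurable_pairProd _).indicator hD).comp
    (measurable_symmOfUpper.comp measurable_update_left)
  have hGa : ∀ x t, G (Function.update x a t) = G x := fun x t => by
    simp only [G, Function.update_idem]
  calc ∫ ω in Ξ ⁻¹' D, pairProd E' (Ξ ω) ∂μ = ∫ ω, X a ω * G (fun e => X e ω) ∂μ := by
        rw [← integral_indicator (hΞ hD)]
        refine integral_congr_ae <| .of_forall fun ω =>
          (Set.indicator_comp_right (g := pairProd E') Ξ).trans ?_
        rw [← symmOfUpper_upperCoords (hsym ω) (hdiag ω)]
        exact indicator_diff_pairEvent_symmOfUpper _ a (hsq ω _ _) hT hE' hcount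
    _ = (∫ ω, X a ω ∂μ) * ∫ ω, G (fun e => X e ω) ∂μ :=
        integral_mul_eq_mul_integral_of_update_invariant hindep (fun e => hmeas _ _) a hG hGa
    _ = 0 := by rw [hcent, zero_mul]

theorem setIntegral_boundedRows_eq_pairsEvent_inter [IsFiniteMeasure μ]
    (hmeas : ∀ i j, Measurable fun ω => Ξ ω i j)
    (hsym : ∀ ω i j, Ξ ω i j = Ξ ω j i) (hdiag : ∀ ω i, Ξ ω i i = 0)
    (hsq : ∀ ω i j, Ξ ω i j ^ 2 ≤ h) (hcent : ∀ i j, i ≠ j → ∫ ω, Ξ ω i j ∂μ = 0)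
    (hindep : iIndepFun (fun (e : UpperPair ι) ω => Ξ ω e.1.1 e.1.2) μ)
    {S : Finset (ι × ι)} (hSlt : ∀ p ∈ S, p.1 < p.2)
    (hdisj : ∀ p ∈ S, ∀ p' ∈ S, p ≠ p' →
      p.1 ≠ p'.1 ∧ p.1 ≠ p'.2 ∧ p.2 ≠ p'.1 ∧ p.2 ≠ p'.2)
    {E' : Multiset (ι × ι)} (hE' : ∀ p ∈ E', p.1 < p.2) (hmult : ∀ p ∈ S, E'.count p = 1) :
    ∫ ω in Ξ ⁻¹' boundedRows r, pairProd E' (Ξ ω) ∂μ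
      = ∫ ω in Ξ ⁻¹' (pairsEvent r h S ∩ boundedRows r), pairProd E' (Ξ ω) ∂μ := by
  have hΞ : Measurable Ξ := measurable_pi_lambda _ fun i => measurable_pi_lambda _ (hmeas i)
  have hint : Integrable (fun ω => pairProd E' (Ξ ω)) μ :=
    .of_bound ((measurable_pairProd E').comp hΞ).aestronglyMeasurable (√h ^ E'.card)
      (.of_forall fun ω => Multiset.abs_prod_map_le_pow_card fun p _ =>
        Real.abs_le_sqrt (hsq ω p.1 p.2))
  suffices ∀ T ⊆ S, ∫ ω in Ξ ⁻¹' (pairsEvent r h T ∩ boundedRows r), pairProd E' (Ξ ω) ∂μ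
      = ∫ ω in Ξ ⁻¹' boundedRows r, pairProd E' (Ξ ω) ∂μ from (this S subset_rfl).symm
  intro T
  induction T using Finset.induction_on with
  | empty => intro _; rw [pairsEvent_empty, Set.univ_inter]
  | insert a T ha ih =>
    intro hsub
    obtain ⟨haS, hTS⟩ := Finset.insert_subset_iff.1 hsub
    have hzero : ∫ ω in Ξ ⁻¹' ((pairsEvent r h T ∩ boundedRows r) \ pairEvent r h a),
        pairProd E' (Ξ ω) ∂μ = 0 :=
      setIntegral_diff_pairEvent_eq_zero hmeas hsym hdiag hsq hindep ⟨a, hSlt a haS⟩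
        (hcent _ _ (hSlt a haS).ne)
        (fun p hp => hdisj p (hTS hp) a haS (ne_of_mem_of_not_mem hp ha)) hE' (hmult a haS)
    rw [← ih hTS, ← integral_inter_add_sdiff (s := Ξ ⁻¹' (pairsEvent r h T ∩ boundedRows r))
      (hΞ (measurableSet_pairEvent r h a)) hint.integrableOn, ← Set.preimage_sdiff, hzero,
      add_zero, pairsEvent_insert, Set.inter_right_comm, Set.preimage_inter]

end RandomMatrix

theorem stmt_13_general {Ω : Type*} [MeasureSpace Ω] [IsProbabilityMeasure (ℙ : Measure Ω)]
    (n : ℕ) (h : ℝ) (hh : 0 ≤ h)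
    (Ξ : Ω → Matrix (Fin n) (Fin n) ℝ)
    (hmeas : ∀ i j, Measurable fun ω => Ξ ω i j)
    (hsym : ∀ ω i j, Ξ ω i j = Ξ ω j i)
    (hdiag : ∀ ω i, Ξ ω i i = 0)
    (hbdd : ∀ ω i j, |Ξ ω i j| ≤ Real.sqrt h)
    (hcent : ∀ i j : Fin n, i ≠ j → ∫ ω, Ξ ω i j = 0)
    (hindep : iIndepFun
      (fun (e : {pr : Fin n × Fin n // pr.1 < pr.2}) => fun ω => Ξ ω e.1.1 e.1.2) ℙ)
    (r : ℝ)
    (S : Finset (Fin n × Fin n))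
    (hSlt : ∀ pr ∈ S, pr.1 < pr.2)
    (hdisj : ∀ pr ∈ S, ∀ pr' ∈ S, pr ≠ pr' →
      pr.1 ≠ pr'.1 ∧ pr.1 ≠ pr'.2 ∧ pr.2 ≠ pr'.1 ∧ pr.2 ≠ pr'.2)
    (E' : Multiset (Fin n × Fin n))
    (hE'lt : ∀ pr ∈ E', pr.1 < pr.2)
    (hmult : ∀ pr ∈ S, E'.count pr = 1) :
    (∫ ω in {ω | ∀ i, (∑ j, (Ξ ω i j) ^ 2) ≤ r},
        (E'.map (fun pr => Ξ ω pr.1 pr.2)).prod ∂ℙ)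
      = ∫ ω in ({ω | ∀ pr ∈ S,
            r + (Ξ ω pr.1 pr.2) ^ 2 - h
              ≤ max (∑ j, (Ξ ω pr.1 j) ^ 2) (∑ j, (Ξ ω pr.2 j) ^ 2)}
          ∩ {ω | ∀ i, (∑ j, (Ξ ω i j) ^ 2) ≤ r}),
          (E'.map (fun pr => Ξ ω pr.1 pr.2)).prod ∂ℙ := by
  have hsq : ∀ ω i j, Ξ ω i j ^ 2 ≤ h := fun ω i j => by
    rw [← sq_abs]
    exact (Real.le_sqrt (abs_nonneg _) hh).1 (hbdd ω i j)
  exact setIntegral_boundedRows_eq_pairsEvent_inter hmeas hsym hdiag hsq hcent hindep hSlt hdisj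
    hE'lt hmult

/-- Let `Ξ` be an `n×n` random symmetric matrix with zero diagonal and
independent centered above-diagonal entries bounded by `√h`, and let `E` be the event that
all rows satisfy `‖row_i‖₂² ≤ r` (of positive probability). For a set `S` of pairwise
disjoint unordered pairs and the event `E_S` that every pair `{i,j} ∈ S` has
`max(‖row_i‖₂², ‖row_j‖₂²) ≥ r + ξ_{ij}² − h`, and for any multiset `E'` of pairs containing
each element of `S` with multiplicity one, one has
`E[∏_{{i,j}∈E'} ξ_{ij} 1_E] = E[∏_{{i,j}∈E'} ξ_{ij} 1_{E_S ∩ E}]`. -/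
theorem stmt_13 {Ω : Type*} [MeasureSpace Ω] [IsProbabilityMeasure (ℙ : Measure Ω)]
    (n : ℕ) (h : ℝ) (hh : 0 ≤ h)
    (Ξ : Ω → Matrix (Fin n) (Fin n) ℝ)
    (hmeas : ∀ i j, Measurable fun ω => Ξ ω i j)
    (hsym : ∀ ω i j, Ξ ω i j = Ξ ω j i)
    (hdiag : ∀ ω i, Ξ ω i i = 0)
    (hbdd : ∀ ω i j, |Ξ ω i j| ≤ Real.sqrt h)
    (hcent : ∀ i j : Fin n, i ≠ j → ∫ ω, Ξ ω i j = 0)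
    (hindep : iIndepFun
      (fun (e : {pr : Fin n × Fin n // pr.1 < pr.2}) => fun ω => Ξ ω e.1.1 e.1.2) ℙ)
    (r : ℝ) (hr : 0 < r)
    (hposE : 0 < ℙ {ω | ∀ i, (∑ j, (Ξ ω i j) ^ 2) ≤ r})
    (S : Finset (Fin n × Fin n))
    (hSlt : ∀ pr ∈ S, pr.1 < pr.2)
    (hdisj : ∀ pr ∈ S, ∀ pr' ∈ S, pr ≠ pr' →
      pr.1 ≠ pr'.1 ∧ pr.1 ≠ pr'.2 ∧ pr.2 ≠ pr'.1 ∧ pr.2 ≠ pr'.2)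
    (E' : Multiset (Fin n × Fin n))
    (hE'lt : ∀ pr ∈ E', pr.1 < pr.2)
    (hmult : ∀ pr ∈ S, E'.count pr = 1) :
    (∫ ω in {ω | ∀ i, (∑ j, (Ξ ω i j) ^ 2) ≤ r},
        (E'.map (fun pr => Ξ ω pr.1 pr.2)).prod ∂ℙ)
      = ∫ ω in ({ω | ∀ pr ∈ S,
            r + (Ξ ω pr.1 pr.2) ^ 2 - h
              ≤ max (∑ j, (Ξ ω pr.1 j) ^ 2) (∑ j, (Ξ ω pr.2 j) ^ 2)}
          ∩ {ω | ∀ i, (∑ j, (Ξ ω i j) ^ 2) ≤ r}),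
          (E'.map (fun pr => Ξ ω pr.1 pr.2)).prod ∂ℙ :=
  stmt_13_general n h hh Ξ hmeas hsym hdiag hbdd hcent hindep r S hSlt hdisj E' hE'lt hmult
end

section
/- Let ξ, a, b' be as follows: ξ has unit second moment, a and b' are Bernoulli with success probabilities ε and p/ε (0 < p ≤ ε < 1), all jointly independent. Set b = a·b', β = √(ε + ε²(E ξ)²/(1−ε)), and ξ_ε' = β^{−1}(a·ξ − ε(1−a)(E ξ)/(1−ε)). Then, conditionally on ξ and on the event {b = 0}: E[b'ξ_ε' | ξ, b=0] = −β^{−1} p (E ξ)/(1−p) and E[(b'ξ_ε')² | ξ, b=0] = (p/(1−p)) · β^{−2} ε (E ξ)²/(1−ε). -/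
/-!
On `{a b' = 0}` the variable `b' ξ_ε'` vanishes except on `{a = 0, b' = 1}`, where it is the
constant `-β⁻¹ ε (E ξ) / (1 - ε)`, whatever `ξ` is. Both conditional moments are therefore this
constant (resp. its square) times `P(a = 0, b' = 1) / P(a b' = 0) = (1 - ε)(p / ε) / (1 - p)`,
which independence of `a` and `b'` gives.
-/

open MeasureTheory ProbabilityTheory

section

variable {Ω : Type*} [MeasurableSpace Ω] {μ : Measure Ω}

lemma cond_real_apply_of_subset {s t : Set Ω} (hs : MeasurableSet s) (ht : t ⊆ s) :
    (μ[|s]).real t = μ.real t / μ.real s := by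
  rw [measureReal_def, cond_apply hs, Set.inter_eq_right.mpr ht, ENNReal.toReal_mul,
    ENNReal.toReal_inv, div_eq_inv_mul, measureReal_def, measureReal_def]

lemma integral_cond_eq_of_eqOn_indicator {s t : Set Ω} (hs : MeasurableSet s)
    (ht : MeasurableSet t) (hts : t ⊆ s) {f : Ω → ℝ} {c : ℝ}
    (hf : Set.EqOn f (t.indicator fun _ => c) s) :
    ∫ ω, f ω ∂μ[|s] = μ.real t / μ.real s * c := by
  rw [integral_congr_ae ((ae_cond_mem hs).mono fun ω hω => hf hω), integral_indicator_const c ht,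
    cond_real_apply_of_subset hs hts, smul_eq_mul]

variable {a b : Ω → ℝ}

lemma measureReal_setOf_eq_zero_of_zero_or_one [IsProbabilityMeasure μ] (hma : Measurable a)
    (ha : ∀ ω, a ω = 0 ∨ a ω = 1) :
    μ.real {ω | a ω = 0} = 1 - μ.real {ω | a ω = 1} := by
  have : {ω | a ω = 0} = {ω | a ω = 1}ᶜ := by
    ext ω
    rcases ha ω with h | h <;> simp [h]
  exact this ▸ probReal_compl_eq_one_sub (measurableSet_eq_fun hma measurable_const)

lemma ProbabilityTheory.IndepFun.measureReal_setOf_eq_eq {c d : ℝ} (hab : IndepFun a b μ) :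
    μ.real ({ω | a ω = c} ∩ {ω | b ω = d}) = μ.real {ω | a ω = c} * μ.real {ω | b ω = d} := by
  simp only [measureReal_def, ← ENNReal.toReal_mul]
  exact congrArg ENNReal.toReal (hab.measure_inter_preimage_eq_mul {c} {d}
    (measurableSet_singleton c) (measurableSet_singleton d))

lemma ProbabilityTheory.IndepFun.measureReal_setOf_mul_eq_zero [IsProbabilityMeasure μ]
    (hab : IndepFun a b μ) (hma : Measurable a) (hmb : Measurable b)
    (ha : ∀ ω, a ω = 0 ∨ a ω = 1) (hb : ∀ ω, b ω = 0 ∨ b ω = 1) :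
    μ.real {ω | a ω * b ω = 0} = 1 - μ.real {ω | a ω = 1} * μ.real {ω | b ω = 1} := by
  have : {ω | a ω * b ω = 0} = ({ω | a ω = 1} ∩ {ω | b ω = 1})ᶜ := by
    ext ω
    rcases ha ω with h | h <;> rcases hb ω with h' | h' <;> simp [h, h']
  rw [this, probReal_compl_eq_one_sub ((measurableSet_eq_fun hma measurable_const).inter
    (measurableSet_eq_fun hmb measurable_const)), hab.measureReal_setOf_eq_eq]

end

theorem stmt_15_general {Ω : Type*} [MeasureSpace Ω] [IsProbabilityMeasure (ℙ : Measure Ω)]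
    (ε p : ℝ) (hp0 : 0 < p) (hpε : p ≤ ε) (hε1 : ε < 1)
    (ξ a b' : Ω → ℝ)
    (hma : Measurable a) (hmb : Measurable b')
    (ha01 : ∀ ω, a ω = 0 ∨ a ω = 1)
    (haP : ℙ {ω | a ω = 1} = ENNReal.ofReal ε)
    (hb01 : ∀ ω, b' ω = 0 ∨ b' ω = 1)
    (hbP : ℙ {ω | b' ω = 1} = ENNReal.ofReal (p / ε))
    (hindep : iIndepFun ![ξ, a, b'] ℙ) :
    (∫ ω, b' ω *
          ((Real.sqrt (ε + ε ^ 2 * (∫ ω', ξ ω') ^ 2 / (1 - ε)))⁻¹ *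
            (a ω * ξ ω - ε * (1 - a ω) * (∫ ω', ξ ω') / (1 - ε)))
        ∂(ℙ[|{ω | a ω * b' ω = 0}]) =
      -((Real.sqrt (ε + ε ^ 2 * (∫ ω', ξ ω') ^ 2 / (1 - ε)))⁻¹ * p * (∫ ω', ξ ω') / (1 - p))) ∧
    (∫ ω, (b' ω *
          ((Real.sqrt (ε + ε ^ 2 * (∫ ω', ξ ω') ^ 2 / (1 - ε)))⁻¹ *
            (a ω * ξ ω - ε * (1 - a ω) * (∫ ω', ξ ω') / (1 - ε)))) ^ 2
        ∂(ℙ[|{ω | a ω * b' ω = 0}]) =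
      (p / (1 - p)) *
        ((Real.sqrt (ε + ε ^ 2 * (∫ ω', ξ ω') ^ 2 / (1 - ε)))⁻¹ ^ 2 *
          ε * (∫ ω', ξ ω') ^ 2 / (1 - ε))) := by
  have hε0 : 0 < ε := hp0.trans_le hpε
  set m := ∫ ω', ξ ω'
  set r := (Real.sqrt (ε + ε ^ 2 * m ^ 2 / (1 - ε)))⁻¹
  set S := {ω | a ω * b' ω = 0}
  set T := {ω | a ω = 0} ∩ {ω | b' ω = 1}
  have hab : IndepFun a b' ℙ := hindep.indepFun (i := 1) (j := 2) (by decide)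
  have hPa : (ℙ : Measure Ω).real {ω | a ω = 1} = ε := by
    rw [measureReal_def, haP, ENNReal.toReal_ofReal hε0.le]
  have hPb : (ℙ : Measure Ω).real {ω | b' ω = 1} = p / ε := by
    rw [measureReal_def, hbP, ENNReal.toReal_ofReal (by positivity)]
  have hPS : (ℙ : Measure Ω).real S = 1 - p := by
    rw [hab.measureReal_setOf_mul_eq_zero hma hmb ha01 hb01, hPa, hPb, mul_div_cancel₀ p hε0.ne']
  have hPT : (ℙ : Measure Ω).real T = (1 - ε) * (p / ε) := by
    rw [hab.measureReal_setOf_eq_eq, measureReal_setOf_eq_zero_of_zero_or_one hma ha01, hPa, hPb]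
  have hmS : MeasurableSet S := measurableSet_eq_fun (hma.mul hmb) measurable_const
  have hmT : MeasurableSet T :=
    (measurableSet_eq_fun hma measurable_const).inter (measurableSet_eq_fun hmb measurable_const)
  have hTS : T ⊆ S := fun ω hω => mul_eq_zero_of_left hω.1 _
  have hf : Set.EqOn (fun ω => b' ω * (r * (a ω * ξ ω - ε * (1 - a ω) * m / (1 - ε))))
      (T.indicator fun _ => -(r * ε * m / (1 - ε))) S := by
    intro ω hω
    rcases ha01 ω with ha | ha <;> rcases hb01 ω with hb | hb <;>
      simp [S, T, ha, hb] at hω ⊢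
    ring
  have hf2 : Set.EqOn (fun ω => (b' ω * (r * (a ω * ξ ω - ε * (1 - a ω) * m / (1 - ε)))) ^ 2)
      (T.indicator fun _ => (-(r * ε * m / (1 - ε))) ^ 2) S := fun ω hω => by
    by_cases hωT : ω ∈ T <;> simp [hf hω, hωT]
  have h1p : 1 - p ≠ 0 := by linarith
  have h1ε : 1 - ε ≠ 0 := by linarith
  constructor
  · rw [integral_cond_eq_of_eqOn_indicator hmS hmT hTS hf, hPS, hPT]
    field_simp
  · rw [integral_cond_eq_of_eqOn_indicator hmS hmT hTS hf2, hPS, hPT]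
    field_simp

/-- With `ξ, a, b'` jointly independent, `a`, `b'` Bernoulli of parameters
`ε` and `p/ε` (`0 < p ≤ ε < 1`), `b = a·b'`, `β = √(ε + ε²(Eξ)²/(1−ε))` and
`ξ_ε' = β⁻¹(aξ − ε(1−a)(Eξ)/(1−ε))`, conditionally on the event `{b = 0}` (the conditional
quantities do not depend on `ξ` by independence) one has
`E[b'ξ_ε' | b=0] = −β⁻¹p(Eξ)/(1−p)` and `E[(b'ξ_ε')² | b=0] = (p/(1−p))·β⁻²ε(Eξ)²/(1−ε)`. -/
theorem stmt_15 {Ω : Type*} [MeasureSpace Ω] [IsProbabilityMeasure (ℙ : Measure Ω)]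
    (ε p : ℝ) (hp0 : 0 < p) (hpε : p ≤ ε) (hε1 : ε < 1)
    (ξ a b' : Ω → ℝ)
    (hmξ : Measurable ξ) (hma : Measurable a) (hmb : Measurable b')
    (hξint : Integrable ξ) (hξ2int : Integrable fun ω => (ξ ω) ^ 2)
    (hξ2 : ∫ ω, (ξ ω) ^ 2 = 1)
    (ha01 : ∀ ω, a ω = 0 ∨ a ω = 1)
    (haP : ℙ {ω | a ω = 1} = ENNReal.ofReal ε)
    (hb01 : ∀ ω, b' ω = 0 ∨ b' ω = 1)
    (hbP : ℙ {ω | b' ω = 1} = ENNReal.ofReal (p / ε))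
    (hindep : iIndepFun ![ξ, a, b'] ℙ) :
    (∫ ω, b' ω *
          ((Real.sqrt (ε + ε ^ 2 * (∫ ω', ξ ω') ^ 2 / (1 - ε)))⁻¹ *
            (a ω * ξ ω - ε * (1 - a ω) * (∫ ω', ξ ω') / (1 - ε)))
        ∂(ℙ[|{ω | a ω * b' ω = 0}]) =
      -((Real.sqrt (ε + ε ^ 2 * (∫ ω', ξ ω') ^ 2 / (1 - ε)))⁻¹ * p * (∫ ω', ξ ω') / (1 - p))) ∧
    (∫ ω, (b' ω *
          ((Real.sqrt (ε + ε ^ 2 * (∫ ω', ξ ω') ^ 2 / (1 - ε)))⁻¹ *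
            (a ω * ξ ω - ε * (1 - a ω) * (∫ ω', ξ ω') / (1 - ε)))) ^ 2
        ∂(ℙ[|{ω | a ω * b' ω = 0}]) =
      (p / (1 - p)) *
        ((Real.sqrt (ε + ε ^ 2 * (∫ ω', ξ ω') ^ 2 / (1 - ε)))⁻¹ ^ 2 *
          ε * (∫ ω', ξ ω') ^ 2 / (1 - ε))) :=
  stmt_15_general ε p hp0 hpε hε1 ξ a b' hma hmb ha01 haP hb01 hbP hindep
end

section
/- Let m ∈ ℕ and 0 ≤ u ≤ r ≤ m, and suppose the set H(m,r,u) of admissible diagram-subset pairs is nonempty. For any (H, B̃) ∈ H(m,r,u), if t₁ < t₂ < … < t_r are the elements of B̃ in increasing order, then H(t₁) ≥ H(t₂) ≥ … ≥ H(t_r), and moreover for every i ∈ [r−1] and every x ∈ [t_i, t_{i+1}] we have H(x) ≥ H(t_{i+1}). -/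
/-- (Claim 2 for the diagram class `H(m,r,u)`.) Let `(H, B̃)` satisfy the
defining properties of `H(m,r,u)`. If `t₁ < … < t_r` are the elements of `B̃`, then
`H(t₁) ≥ … ≥ H(t_r)`, and for consecutive elements `t_i < t_{i+1}` of `B̃` and any
`x ∈ [t_i, t_{i+1}]` one has `H(x) ≥ H(t_{i+1})`. -/
theorem stmt_17 (m r u : ℕ) (hur : u ≤ r) (hrm : r ≤ m)
    (H : ℕ → ℤ) (B : Finset ℕ)
    (hBm : ∀ t ∈ B, t ≤ m)
    (hH0 : H 0 = 0)
    (hstep : ∀ t < m, H (t + 1) = H t + 1 ∨ H (t + 1) = H t - 1)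
    (hcard : B.card = r)
    (hu : ({t | 1 ≤ t ∧ t ≤ m ∧ (t - 1) ∈ B ∧ H t = H (t - 1) + 1}).ncard = u)
    (hstruct : ∀ t' t : ℕ, t' < t → t ≤ m → H t = H t' →
      (∀ T, t' ≤ T → T ≤ t → H t ≤ H T) → (t' ∈ B ↔ t ∈ B))
    (hdown : ∀ t ∈ B, t ≠ 0 → H t = H (t - 1) - 1) :
    (∀ t ∈ B, ∀ t' ∈ B, t ≤ t' → H t' ≤ H t) ∧
    (∀ t ∈ B, ∀ t' ∈ B, t < t' → (∀ s ∈ B, s ≤ t ∨ t' ≤ s) →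
      ∀ x, t ≤ x → x ≤ t' → H t' ≤ H x) := by
  -- Key claim: for `t' ∈ B`, `H t'` is the minimum of `H` on `[0, t']`.
  have key : ∀ t' ∈ B, ∀ x, x ≤ t' → H t' ≤ H x := by
    intro t' ht' x hx
    by_contra hlt
    push_neg at hlt
    -- let s be the largest time ≤ t' with H s < H t'
    classical
    set s := Nat.findGreatest (fun s => H s < H t') t' with hs
    have hsP : H s < H t' := Nat.findGreatest_spec (P := fun s => H s < H t') hx hlt
    have hst' : s ≤ t' := Nat.findGreatest_le t'
    have hslt : s < t' := by
      rcases lt_or_eq_of_le hst' with h | h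
      · exact h
      · rw [h] at hsP; exact absurd hsP (lt_irrefl _)
    have hmin : ∀ T, s < T → T ≤ t' → H t' ≤ H T := by
      intro T hT1 hT2
      by_contra hc
      push_neg at hc
      exact Nat.findGreatest_is_greatest hT1 hT2 hc
    have hs1 : H (s + 1) = H s + 1 := by
      rcases hstep s (lt_of_lt_of_le hslt (hBm t' ht')) with h | h
      · exact h
      · have := hmin (s + 1) (Nat.lt_succ_self s) hslt
        omega
    have hs1t' : H (s + 1) = H t' := by
      have h1 := hmin (s + 1) (Nat.lt_succ_self s) hslt
      have : H s < H t' := hsP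
      omega
    rcases eq_or_lt_of_le (Nat.succ_le_of_lt hslt) with heq | hlt2
    · -- s + 1 = t' : contradiction with the down-step at t'
      have hd := hdown t' ht' (by omega)
      have h2 : t' - 1 = s := by omega
      rw [h2] at hd
      omega
    · -- s + 1 < t' : structural condition forces s + 1 ∈ B, contradiction with down-step
      have hiff := hstruct (s + 1) t' hlt2 (hBm t' ht') hs1t'.symm
        (fun T hT1 hT2 => hmin T (by omega) hT2)
      have hs1B : s + 1 ∈ B := hiff.mpr ht'
      have hd := hdown (s + 1) hs1B (by omega)
      simp only [Nat.add_sub_cancel] at hd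
      omega
  constructor
  · intro t ht t' ht' htt'
    exact key t' ht' t htt'
  · intro t ht t' ht' htt' _ x hx1 hx2
    exact key t' ht' x hx2
end
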